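/- arXiv:2207.03629 — 6 statements merged into one kernel-verified Lean document; each statement's English description precedes it below -/
import Mathlib

section
/- The topological entropy h(G) of a free semigroup action G generated by finitely many continuous maps on a compact metric space coincides with its pseudo-entropy h*(G), i.e. h(G) = h*(G). -/
open Metric Filter Set
open scoped Classical

noncomputable section

variable {X : Type*} [MetricSpace X] {Y : Type*} [MetricSpace Y] {ι κ : Type*}

/-- `c` satisfies the `(w, δ)`-chain condition along the word `w`. -/
def IsChainSeq (f : ι → X → X) (w : List ι) (δ : ℝ) (c : ℕ → X) : Prop :=
  ∀ (j : ℕ) (h : j < w.length), dist (f (w.get ⟨j, h⟩) (c j)) (c (j + 1)) ≤ δ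

/-- There is a `(w, δ)`-chain from `a` to `b` with `|w| = n`. -/
def ChainFrom (f : ι → X → X) (δ : ℝ) (a b : X) (n : ℕ) : Prop :=
  ∃ w : List ι, w.length = n ∧ ∃ c : ℕ → X, IsChainSeq f w δ c ∧ c 0 = a ∧ c n = b

/-- `x` is a chain recurrent point of the action generated by `f`. -/
def ChainRecurrentPt (f : ι → X → X) (x : X) : Prop :=
  ∀ ε : ℝ, 0 < ε → ∃ n : ℕ, 0 < n ∧ ChainFrom f ε x x n

/-- The action generated by `f` is chain recurrent. -/
def ChainRecurrent (f : ι → X → X) : Prop := ∀ x : X, ChainRecurrentPt f x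

/-- The action generated by `f` is chain transitive. -/
def ChainTransitive (f : ι → X → X) : Prop :=
  ∀ ε : ℝ, 0 < ε → ∀ a b : X, ∃ n : ℕ, 0 < n ∧ ChainFrom f ε a b n

/-- The action generated by `f` is chain mixing. -/
def ChainMixing (f : ι → X → X) : Prop :=
  ∀ ε : ℝ, 0 < ε → ∃ N : ℕ, 0 < N ∧ ∀ a b : X, ∀ n : ℕ, N ≤ n → ChainFrom f ε a b n

/-- The `ε`-chain recurrence time `r_ε(x, G)`. -/
def rTime (f : ι → X → X) (ε : ℝ) (x : X) : ℕ :=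
  sInf {n : ℕ | 0 < n ∧ ChainFrom f ε x x n}

/-- `r_ε(G) = max_x r_ε(x, G)`. -/
def rTimeSup (f : ι → X → X) (ε : ℝ) : ℕ :=
  sSup (Set.range fun x : X => rTime f ε x)

/-- The chain mixing time `m_ε(x, δ, G)`. -/
def mTime (f : ι → X → X) (ε δ : ℝ) (x : X) : ℕ :=
  sInf {N : ℕ | ∀ n : ℕ, N ≤ n → ∀ y : X, ∃ z : X, dist z x < δ ∧ ChainFrom f ε z y n}

/-- `m_ε(δ, G) = max_x m_ε(x, δ, G)`. -/
def mTimeSup (f : ι → X → X) (ε δ : ℝ) : ℕ :=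
  sSup (Set.range fun x : X => mTime f ε δ x)

/-- `f_w = f_{i₀} ∘ f_{i₁} ∘ ⋯ ∘ f_{i_{k-1}}` applied to `x`. -/
def applyWord (f : ι → X → X) (w : List ι) (x : X) : X := w.foldr f x

/-- The generators of `G^k`, indexed by the words of length `k`. -/
def powerGens (f : ι → X → X) (k : ℕ) : (Fin k → ι) → X → X :=
  fun u => applyWord f (List.ofFn u)

/-- The generators `f_j × g_k` of the product action `G × H`. -/
def prodGens (f : ι → X → X) (g : κ → Y → Y) : ι × κ → X × Y → X × Y :=
  fun p z => (f p.1 z.1, g p.2 z.2)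

/-- `T_ε(x)`: the set of lengths of `(w, ε)`-chains from `x` to itself. -/
def Tset (f : ι → X → X) (ε : ℝ) (x : X) : Set ℕ :=
  {n : ℕ | 0 < n ∧ ChainFrom f ε x x n}

/-- `k = gcd T` for a set `T ⊆ ℕ`. -/
def IsGCDOf (T : Set ℕ) (k : ℕ) : Prop :=
  (∀ t ∈ T, k ∣ t) ∧ ∀ d : ℕ, (∀ t ∈ T, d ∣ t) → d ∣ k

/-- `x ∼_ε y`: there is an `(w, ε)`-chain from `x` to `y` whose length is a multiple of `k`. -/
def RelEps (f : ι → X → X) (ε : ℝ) (k : ℕ) (x y : X) : Prop :=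
  ∃ n : ℕ, 0 < n ∧ k ∣ n ∧ ChainFrom f ε x y n

/-- The orbit segment: the first `j` letters of `w` applied, in order, to `x`. -/
def orbitSeg (f : ι → X → X) (w : List ι) (x : X) (j : ℕ) : X :=
  (w.take j).foldl (fun y i => f i y) x

/-- The Bowen-type word metric `d_w`. -/
def wordDist (f : ι → X → X) (w : List ι) (x y : X) : ℝ :=
  ⨆ j : Fin (w.length + 1), dist (orbitSeg f w x (j : ℕ)) (orbitSeg f w y (j : ℕ))

/-- `N(w, ε, G)`: maximal cardinality of a `(w, ε, G)`-separated subset of `X`. -/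
def sepMax (f : ι → X → X) (w : List ι) (ε : ℝ) : ℕ :=
  sSup {k : ℕ | ∃ K : Finset X,
    (∀ x ∈ K, ∀ y ∈ K, x ≠ y → ε ≤ wordDist f w x y) ∧ K.card = k}

/-- Bufetov's topological entropy `h(G)` of a free semigroup action. -/
def topEntropy {m : ℕ} (f : Fin m → X → X) : ℝ :=
  ⨆ ε : {e : ℝ // 0 < e},
    Filter.limsup (fun n : ℕ =>
      Real.log ((∑ w : Fin n → Fin m, (sepMax f (List.ofFn w) ε.1 : ℝ)) / (m : ℝ) ^ n) / (n : ℝ))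
      Filter.atTop

/-- `N*(w, ε, δ, G)`: maximal cardinality of a `(w, ε, δ, G)`-pseudo-separated set. -/
def pseudoSepMax (f : ι → X → X) (w : List ι) (ε δ : ℝ) : ℕ :=
  sSup {k : ℕ | ∃ K : Finset (ℕ → X),
    (∀ c ∈ K, IsChainSeq f w δ c) ∧
    (∀ c ∈ K, ∀ c' ∈ K, c ≠ c' → ∃ j : ℕ, j < w.length ∧ ε < dist (c j) (c' j)) ∧
    K.card = k}

/-- `B*(w, ε, δ, G)`: minimal cardinality of a `(w, ε, δ, G)`-pseudo-spanning set. -/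
def pseudoSpanMin (f : ι → X → X) (w : List ι) (ε δ : ℝ) : ℕ :=
  sInf {k : ℕ | ∃ K : Finset (ℕ → X),
    (∀ c ∈ K, IsChainSeq f w δ c) ∧
    (∀ c : ℕ → X, IsChainSeq f w δ c →
      ∃ c' ∈ K, ∀ j : ℕ, j < w.length → dist (c j) (c' j) ≤ ε) ∧
    K.card = k}

/-- The pseudo-entropy `h*(G)` of a free semigroup action. -/
def pseudoEntropy {m : ℕ} (f : Fin m → X → X) : ℝ :=
  ⨆ ε : {e : ℝ // 0 < e}, ⨅ δ : {d : ℝ // 0 < d},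
    Filter.limsup (fun n : ℕ =>
      Real.log ((∑ w : Fin n → Fin m, (pseudoSepMax f (List.ofFn w) ε.1 δ.1 : ℝ)) / (m : ℝ) ^ n)
        / (n : ℝ)) Filter.atTop

/-- The metric `d'(ω, ω') = m^{-k}`, `k = inf {n | ωₙ ≠ ω'ₙ}`, on `Σ_m^+ = ℕ → Fin m`. -/
def sigmaDist (m : ℕ) (ω ω' : ℕ → Fin m) : ℝ :=
  if h : ∃ n : ℕ, ω n ≠ ω' n then (1 / (m : ℝ)) ^ Nat.find h else 0

/-- The metric `D = max {d', d}` on `Σ_m^+ × X`. -/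
def skewDist (m : ℕ) (p q : (ℕ → Fin m) × X) : ℝ :=
  max (sigmaDist m p.1 q.1) (dist p.2 q.2)

/-- The skew-product transformation `F(ω, x) = (σ ω, f_{ω 0} x)`. -/
def skewMap {m : ℕ} (f : Fin m → X → X) : (ℕ → Fin m) × X → (ℕ → Fin m) × X :=
  fun p => (fun n => p.1 (n + 1), f (p.1 0) p.2)

/-- `c` is a `δ`-pseudo-orbit of length `n + 1` of the single map `F`,
w.r.t. the distance function `D`. -/
def IsPseudoOrbit {Z : Type*} (D : Z → Z → ℝ) (F : Z → Z) (n : ℕ) (δ : ℝ) (c : ℕ → Z) : Prop :=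
  ∀ j : ℕ, j < n → D (F (c j)) (c (j + 1)) ≤ δ

/-- `N*(n, ε, δ, F)` for a single map `F` w.r.t. a distance function `D`. -/
def pseudoSepMaxMap {Z : Type*} (D : Z → Z → ℝ) (F : Z → Z) (n : ℕ) (ε δ : ℝ) : ℕ :=
  sSup {k : ℕ | ∃ K : Finset (ℕ → Z),
    (∀ c ∈ K, IsPseudoOrbit D F n δ c) ∧
    (∀ c ∈ K, ∀ c' ∈ K, c ≠ c' → ∃ j : ℕ, j < n ∧ ε < D (c j) (c' j)) ∧
    K.card = k}

/-- `B*(n, ε, δ, F)` for a single map `F` w.r.t. a distance function `D`. -/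
def pseudoSpanMinMap {Z : Type*} (D : Z → Z → ℝ) (F : Z → Z) (n : ℕ) (ε δ : ℝ) : ℕ :=
  sInf {k : ℕ | ∃ K : Finset (ℕ → Z),
    (∀ c ∈ K, IsPseudoOrbit D F n δ c) ∧
    (∀ c : ℕ → Z, IsPseudoOrbit D F n δ c →
      ∃ c' ∈ K, ∀ j : ℕ, j ≤ n → D (c j) (c' j) ≤ ε) ∧
    K.card = k}

/-- The pseudo-entropy `h*(F)` of a single map `F` w.r.t. a distance function `D`. -/
def pseudoEntropyMap {Z : Type*} (D : Z → Z → ℝ) (F : Z → Z) : ℝ :=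
  ⨆ ε : {e : ℝ // 0 < e}, ⨅ δ : {d : ℝ // 0 < d},
    Filter.limsup (fun n : ℕ =>
      Real.log (pseudoSepMaxMap D F n ε.1 δ.1 : ℝ) / (n : ℝ)) Filter.atTop

/-- An `ε`-chain of length `n` from `a` to `b` for a single map. -/
def ChainFromMap {Z : Type*} (D : Z → Z → ℝ) (F : Z → Z) (δ : ℝ) (a b : Z) (n : ℕ) : Prop :=
  ∃ c : ℕ → Z, IsPseudoOrbit D F n δ c ∧ c 0 = a ∧ c n = b

/-- `r_ε(z, F)` for a single map. -/
def rTimeMap {Z : Type*} (D : Z → Z → ℝ) (F : Z → Z) (ε : ℝ) (z : Z) : ℕ :=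
  sInf {n : ℕ | 0 < n ∧ ChainFromMap D F ε z z n}

/-- `r_ε(F)` for a single map. -/
def rTimeMapSup {Z : Type*} (D : Z → Z → ℝ) (F : Z → Z) (ε : ℝ) : ℕ :=
  sSup (Set.range fun z : Z => rTimeMap D F ε z)

/-- `m_ε(z, δ, F)` for a single map. -/
def mTimeMap {Z : Type*} (D : Z → Z → ℝ) (F : Z → Z) (ε δ : ℝ) (z : Z) : ℕ :=
  sInf {N : ℕ | ∀ n : ℕ, N ≤ n → ∀ y : Z, ∃ z' : Z, D z' z < δ ∧ ChainFromMap D F ε z' y n}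

/-- `m_ε(δ, F)` for a single map. -/
def mTimeMapSup {Z : Type*} (D : Z → Z → ℝ) (F : Z → Z) (ε δ : ℝ) : ℕ :=
  sSup (Set.range fun z : Z => mTimeMap D F ε δ z)

/-- `N_δ(X)`: the smallest number of sets of diameter at most `δ` that cover `X`. -/
def coverNum (X : Type*) [MetricSpace X] (δ : ℝ) : ℕ :=
  sInf {k : ℕ | ∃ S : Finset (Set X),
    (∀ s ∈ S, Metric.diam s ≤ δ) ∧ (⋃ s ∈ S, s) = Set.univ ∧ S.card = k}

/-- The upper box dimension of `X`. -/
def upperBoxDim (X : Type*) [MetricSpace X] : ℝ :=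
  Filter.limsup (fun δ : ℝ => Real.log (coverNum X δ : ℝ) / (-Real.log δ))
    (nhdsWithin 0 (Set.Ioi 0))

/-- The lower box dimension of `X`. -/
def lowerBoxDim (X : Type*) [MetricSpace X] : ℝ :=
  Filter.liminf (fun δ : ℝ => Real.log (coverNum X δ : ℝ) / (-Real.log δ))
    (nhdsWithin 0 (Set.Ioi 0))

end

/-!
`h(G) ≤ h*(G)`: the orbit segments of a `(w, ε)`-separated set are true orbits, hence
`(w i, ε / 2, δ)`-pseudo-separated chains, so `N(n, ε, G) ≤ N*(n + 1, ε / 2, δ, G)`.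

`h*(G) ≤ h(G)`: fix a block length `L`. By uniform continuity of the finitely many generators,
for small `δ` every `δ`-chain is `ε / 4`-shadowed during `L` steps by the orbit of its initial
point. Chains whose initial points lie in the same `(u, ε / 4)`-Bowen ball of a maximal
separated set are then `ε`-close along `u`, so they can only be separated later; this gives
`N*(u v, ε, δ) ≤ N(u, ε / 4) N*(v, ε, δ)`. Averaging over words turns this into
`N*(n, ε, δ, G) ≤ N(L, ε / 4, G) ^ (n / L) · const`, hence the infimum over `δ` of the
pseudo growth rate is at most `log N(L, ε / 4, G) / L` for every `L`, and so at most the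
growth rate of `N(·, ε / 4, G)`.
-/

section FreeSemigroupAction

variable {X : Type*} {ι : Type*}

theorem orbitSeg_succ (f : ι → X → X) (w : List ι) (x : X) {j : ℕ} (h : j < w.length) :
    orbitSeg f w x (j + 1) = f (w.get ⟨j, h⟩) (orbitSeg f w x j) := by
  simp only [orbitSeg, List.take_add_one, List.getElem?_eq_getElem h, Option.toList_some,
    List.foldl_append, List.foldl_cons, List.foldl_nil, List.get_eq_getElem]

theorem orbitSeg_append_of_le (f : ι → X → X) {u : List ι} (v : List ι) (x : X) {j : ℕ}
    (h : j ≤ u.length) : orbitSeg f (u ++ v) x j = orbitSeg f u x j := by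
  rw [orbitSeg, List.take_append_of_le_length h, orbitSeg]

variable [MetricSpace X] {f : ι → X → X}

theorem isChainSeq_orbitSeg (f : ι → X → X) (w : List ι) (x : X) {δ : ℝ} (hδ : 0 ≤ δ) :
    IsChainSeq f w δ (orbitSeg f w x) := fun j h => by
  rw [orbitSeg_succ f w x h, dist_self]
  exact hδ

theorem IsChainSeq.mono {w : List ι} {δ δ' : ℝ} {c : ℕ → X} (h : IsChainSeq f w δ c)
    (hδ : δ ≤ δ') : IsChainSeq f w δ' c :=
  fun j hj => (h j hj).trans hδ

theorem IsChainSeq.left_of_append {u v : List ι} {δ : ℝ} {c : ℕ → X}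
    (hc : IsChainSeq f (u ++ v) δ c) : IsChainSeq f u δ c := fun j h => by
  simpa [List.getElem_append_left h] using hc j (by simp; omega)

theorem IsChainSeq.right_of_append {u v : List ι} {δ : ℝ} {c : ℕ → X}
    (hc : IsChainSeq f (u ++ v) δ c) : IsChainSeq f v δ (fun j => c (u.length + j)) :=
  fun j h => by
  simpa [List.getElem_append_right, Nat.add_assoc] using hc (u.length + j) (by simp; omega)

theorem dist_orbitSeg_le_wordDist (f : ι → X → X) (w : List ι) (x y : X) {j : ℕ}
    (h : j ≤ w.length) : dist (orbitSeg f w x j) (orbitSeg f w y j) ≤ wordDist f w x y :=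
  le_ciSup (f := fun j : Fin (w.length + 1) => dist (orbitSeg f w x j) (orbitSeg f w y j))
    (Set.finite_range _).bddAbove ⟨j, by omega⟩

theorem wordDist_le {w : List ι} {x y : X} {a : ℝ}
    (h : ∀ j ≤ w.length, dist (orbitSeg f w x j) (orbitSeg f w y j) ≤ a) :
    wordDist f w x y ≤ a :=
  ciSup_le fun j => h j (by omega)

@[simp]
theorem wordDist_self (f : ι → X → X) (w : List ι) (x : X) : wordDist f w x x = 0 := by
  simp [wordDist]

theorem wordDist_comm (f : ι → X → X) (w : List ι) (x y : X) :
    wordDist f w x y = wordDist f w y x := by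
  simp only [wordDist, dist_comm]

theorem pseudoSepMax_le {f : ι → X → X} {w : List ι} {ε δ : ℝ} {N : ℕ}
    (h : ∀ K : Finset (ℕ → X), (∀ c ∈ K, IsChainSeq f w δ c) →
      (∀ c ∈ K, ∀ c' ∈ K, c ≠ c' → ∃ j < w.length, ε < dist (c j) (c' j)) →
      K.card ≤ N) :
    pseudoSepMax f w ε δ ≤ N :=
  csSup_le ⟨0, ∅, by simp, by simp, rfl⟩ fun _ ⟨K, hchain, hsep, hK⟩ =>
    hK ▸ h K hchain hsep

theorem pseudoSepMax_nil_le_one (f : ι → X → X) (ε δ : ℝ) :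
    pseudoSepMax f [] ε δ ≤ 1 :=
  pseudoSepMax_le fun K _ hK => Finset.card_le_one.2 fun c hc c' hc' => by
    by_contra hne
    obtain ⟨j, hj, -⟩ := hK c hc c' hc' hne
    simp at hj

theorem sepMax_le {f : ι → X → X} {w : List ι} {ε : ℝ} {N : ℕ}
    (h : ∀ K : Finset X, (∀ x ∈ K, ∀ y ∈ K, x ≠ y → ε ≤ wordDist f w x y) →
      K.card ≤ N) :
    sepMax f w ε ≤ N :=
  csSup_le ⟨0, ∅, by simp, rfl⟩ fun _ ⟨K, hsep, hK⟩ => hK ▸ h K hsep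

theorem exists_finset_dist_lt [CompactSpace X] {r : ℝ} (hr : 0 < r) :
    ∃ (S : Finset X) (p : X → X), ∀ x, p x ∈ S ∧ dist x (p x) < r := by
  obtain ⟨t, -, ht, hcover⟩ := finite_cover_balls_of_compact (isCompact_univ (X := X)) hr
  have : ∀ x : X, ∃ y ∈ ht.toFinset, dist x y < r := fun x => by
    simpa using hcover (Set.mem_univ x)
  choose p hpS hp using this
  exact ⟨_, p, fun x => ⟨hpS x, hp x⟩⟩

/-- Rounding every coordinate to an `r / 2`-net is injective on an `r`-separated family. -/
theorem exists_card_le_pow_of_separated [CompactSpace X] {r : ℝ} (hr : 0 < r) :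
    ∃ C : ℕ, ∀ (n : ℕ) (K : Finset (ℕ → X)),
      (∀ c ∈ K, ∀ c' ∈ K, c ≠ c' → ∃ j < n, r < dist (c j) (c' j)) →
      K.card ≤ C ^ n := by
  obtain ⟨S, p, hp⟩ := exists_finset_dist_lt (X := X) (half_pos hr)
  refine ⟨S.card, fun n K hK => ?_⟩
  calc K.card ≤ (Finset.univ : Finset (Fin n → S)).card := by
        refine Finset.card_le_card_of_injOn (fun c j => ⟨p (c j), (hp _).1⟩)
          (fun _ _ => Finset.mem_coe.2 (Finset.mem_univ _)) fun c hc c' hc' hcc' => ?_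
        by_contra hne
        obtain ⟨j, hj, hsep⟩ := hK c hc c' hc' hne
        have hpj : p (c j) = p (c' j) := congrArg Subtype.val (congrFun hcc' ⟨j, hj⟩)
        have := dist_triangle_right (c j) (c' j) (p (c j))
        linarith [(hp (c j)).2, hpj ▸ (hp (c' j)).2]
    _ = S.card ^ n := by simp

theorem exists_card_le_pow_of_wordSeparated [CompactSpace X] (f : ι → X → X) {ρ : ℝ}
    (hρ : 0 < ρ) :
    ∃ C : ℕ, ∀ (w : List ι) (K : Finset X),
      (∀ x ∈ K, ∀ y ∈ K, x ≠ y → ρ ≤ wordDist f w x y) →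
      K.card ≤ C ^ (w.length + 1) := by
  obtain ⟨C, hC⟩ := exists_card_le_pow_of_separated (X := X) (half_pos hρ)
  refine ⟨C, fun w K hK => ?_⟩
  have hinj : Set.InjOn (orbitSeg f w) K := fun x _ y _ hxy => congrFun hxy 0
  rw [← Finset.card_image_of_injOn hinj]
  refine hC _ _ fun c hc c' hc' hne => ?_
  obtain ⟨x, hx, rfl⟩ := Finset.mem_image.1 hc
  obtain ⟨y, hy, rfl⟩ := Finset.mem_image.1 hc'
  by_contra! hclose
  have := hK x hx y hy (fun h => hne (h ▸ rfl))
  have := wordDist_le (f := f) fun j hj => hclose j (Nat.lt_succ_of_le hj)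
  linarith

section SepMax

variable [CompactSpace X] (f : ι → X → X) (w : List ι)

theorem bddAbove_sepMax_set {ε : ℝ} (hε : 0 < ε) :
    BddAbove {k : ℕ | ∃ K : Finset X,
      (∀ x ∈ K, ∀ y ∈ K, x ≠ y → ε ≤ wordDist f w x y) ∧ K.card = k} := by
  obtain ⟨C, hC⟩ := exists_card_le_pow_of_wordSeparated f hε
  exact ⟨C ^ (w.length + 1), by rintro _ ⟨K, hK, rfl⟩; exact hC w K hK⟩

theorem bddAbove_pseudoSepMax_set {ε : ℝ} (δ : ℝ) (hε : 0 < ε) :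
    BddAbove {k : ℕ | ∃ K : Finset (ℕ → X), (∀ c ∈ K, IsChainSeq f w δ c) ∧
      (∀ c ∈ K, ∀ c' ∈ K, c ≠ c' → ∃ j < w.length, ε < dist (c j) (c' j)) ∧
      K.card = k} := by
  obtain ⟨C, hC⟩ := exists_card_le_pow_of_separated (X := X) hε
  exact ⟨C ^ w.length, by rintro _ ⟨K, -, hK, rfl⟩; exact hC _ K hK⟩

theorem card_le_pseudoSepMax {ε δ : ℝ} (hε : 0 < ε) {K : Finset (ℕ → X)}
    (hchain : ∀ c ∈ K, IsChainSeq f w δ c)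
    (hsep : ∀ c ∈ K, ∀ c' ∈ K, c ≠ c' → ∃ j < w.length, ε < dist (c j) (c' j)) :
    K.card ≤ pseudoSepMax f w ε δ :=
  le_csSup (bddAbove_pseudoSepMax_set f w δ hε) ⟨K, hchain, hsep, rfl⟩

/-- A maximal `(w, ε)`-separated set is `(w, ε)`-spanning. -/
theorem exists_card_eq_sepMax_spanning {ε : ℝ} (hε : 0 < ε) :
    ∃ K : Finset X, K.card = sepMax f w ε ∧ ∀ x, ∃ y ∈ K, wordDist f w x y < ε := by
  have hbdd := bddAbove_sepMax_set f w hε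
  obtain ⟨K, hK, hcard⟩ := Nat.sSup_mem (by exact ⟨0, ∅, by simp, rfl⟩) hbdd
  refine ⟨K, hcard, fun x => ?_⟩
  by_contra! hfar
  have hx : x ∉ K := fun hx => by simpa using hε.trans_le (hfar x hx)
  have hins : (insert x K).card ≤ sepMax f w ε := by
    refine le_csSup hbdd ⟨insert x K, fun a ha b hb hab => ?_, rfl⟩
    rcases Finset.mem_insert.1 ha with rfl | haK
    · exact hfar b ((Finset.mem_insert.1 hb).resolve_left hab.symm)
    rcases Finset.mem_insert.1 hb with rfl | hbK
    · exact wordDist_comm f w a b ▸ hfar a haK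
    · exact hK a haK b hbK hab
  rw [Finset.card_insert_of_notMem hx] at hins
  change _ ≤ sSup _ at hins
  omega

theorem one_le_sepMax [Nonempty X] {ε : ℝ} (hε : 0 < ε) : 1 ≤ sepMax f w ε :=
  le_csSup (bddAbove_sepMax_set f w hε) ⟨{Classical.arbitrary X}, by simp, rfl⟩

theorem one_le_pseudoSepMax [Nonempty X] {ε δ : ℝ} (hε : 0 < ε) (hδ : 0 ≤ δ) :
    1 ≤ pseudoSepMax f w ε δ := by
  simpa using card_le_pseudoSepMax f w (K := {orbitSeg f w (Classical.arbitrary X)}) hε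
    (by simpa using isChainSeq_orbitSeg f w _ hδ) (by simp)

end SepMax

theorem exists_sepMax_le_pow [CompactSpace X] (f : ι → X → X) {ε : ℝ} (hε : 0 < ε) :
    ∃ C : ℕ, ∀ w, sepMax f w ε ≤ C ^ (w.length + 1) := by
  obtain ⟨C, hC⟩ := exists_card_le_pow_of_wordSeparated f hε
  exact ⟨C, fun w => sepMax_le (hC w)⟩

theorem exists_pseudoSepMax_le_pow [CompactSpace X] (f : ι → X → X) {ε : ℝ} (hε : 0 < ε) :
    ∃ C : ℕ, ∀ w δ, pseudoSepMax f w ε δ ≤ C ^ (w.length + 1) := by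
  obtain ⟨C, hC⟩ := exists_card_le_pow_of_separated (X := X) hε
  refine ⟨C, fun w δ => pseudoSepMax_le fun K _ hK => hC _ K fun c hc c' hc' hne => ?_⟩
  obtain ⟨j, hj, h⟩ := hK c hc c' hc' hne
  exact ⟨j, by omega, h⟩

noncomputable def growthRate (a : ℕ → ℝ) : ℝ :=
  limsup (fun n : ℕ => Real.log (a n) / n) atTop

theorem limsup_le_limsup_succ_of_le_add_div {u v : ℕ → ℝ} {K : ℝ}
    (hu : IsCoboundedUnder (· ≤ ·) atTop u) (hv : IsBoundedUnder (· ≤ ·) atTop v)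
    (h : ∀ n ≥ 1, u n ≤ v (n + 1) + K / n) : limsup u atTop ≤ limsup v atTop := by
  refine le_of_forall_gt_imp_ge_of_dense fun b hb => limsup_le_of_le hu ?_
  obtain ⟨η, hη, rfl⟩ : ∃ η > 0, b = limsup v atTop + 2 * η :=
    ⟨(b - limsup v atTop) / 2, by linarith, by ring⟩
  have hv' : ∀ᶠ n in atTop, v (n + 1) < limsup v atTop + η :=
    (tendsto_add_atTop_nat 1).eventually
      (eventually_lt_of_limsup_lt (lt_add_of_pos_right _ hη) hv)
  have hK : ∀ᶠ n : ℕ in atTop, K / n ≤ η :=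
    (tendsto_const_div_atTop_nhds_zero_nat K).eventually_le_const hη
  filter_upwards [hv', hK, eventually_ge_atTop 1] with n hvn hKn hn
  linarith [h n hn]

section GrowthRate

variable {a b : ℕ → ℝ} {C : ℕ}

theorem log_div_nonneg {x : ℝ} (hx : 1 ≤ x) (n : ℕ) : 0 ≤ Real.log x / n :=
  div_nonneg (Real.log_nonneg hx) n.cast_nonneg

theorem log_div_le_two_mul_log {x : ℝ} {n : ℕ} (hx : 1 ≤ x)
    (hxC : x ≤ (C : ℝ) ^ (n + 1)) : Real.log x / n ≤ 2 * Real.log C := by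
  have hC := Real.log_natCast_nonneg C
  rcases Nat.eq_zero_or_pos n with rfl | hn
  · simpa using hC
  have hn' : (1 : ℝ) ≤ n := Nat.one_le_cast.2 hn
  rw [div_le_iff₀ (by positivity)]
  calc Real.log x ≤ Real.log ((C : ℝ) ^ (n + 1)) := Real.log_le_log (by linarith) hxC
    _ = (n + 1) * Real.log C := by rw [Real.log_pow]; push_cast; ring
    _ ≤ 2 * Real.log C * n := by nlinarith

theorem isBoundedUnder_log_div (ha : ∀ n, 1 ≤ a n) (haC : ∀ n, a n ≤ (C : ℝ) ^ (n + 1)) :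
    IsBoundedUnder (· ≤ ·) atTop fun n : ℕ => Real.log (a n) / n :=
  isBoundedUnder_of ⟨_, fun n => log_div_le_two_mul_log (ha n) (haC n)⟩

theorem isCoboundedUnder_log_div (ha : ∀ n, 1 ≤ a n) :
    IsCoboundedUnder (· ≤ ·) atTop fun n : ℕ => Real.log (a n) / n :=
  isCoboundedUnder_le_of_le atTop fun n => log_div_nonneg (ha n) n

theorem le_growthRate {x : ℝ} (ha : ∀ n, 1 ≤ a n) (haC : ∀ n, a n ≤ (C : ℝ) ^ (n + 1))
    (h : ∀ n ≥ 1, x ≤ Real.log (a n) / n) : x ≤ growthRate a :=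
  le_limsup_of_frequently_le ((eventually_ge_atTop 1).mono h).frequently
    (isBoundedUnder_log_div ha haC)

theorem growthRate_nonneg (ha : ∀ n, 1 ≤ a n) (haC : ∀ n, a n ≤ (C : ℝ) ^ (n + 1)) :
    0 ≤ growthRate a :=
  le_growthRate ha haC fun n _ => log_div_nonneg (ha n) n

theorem growthRate_le_of_le_succ (ha : ∀ n, 1 ≤ a n) (hb : ∀ n, 1 ≤ b n)
    (hbC : ∀ n, b n ≤ (C : ℝ) ^ (n + 1)) (h : ∀ n, a n ≤ b (n + 1)) :
    growthRate a ≤ growthRate b := by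
  refine limsup_le_limsup_succ_of_le_add_div (K := 2 * Real.log C) (isCoboundedUnder_log_div ha)
    (isBoundedUnder_log_div hb hbC) fun n hn => ?_
  set v := Real.log (b (n + 1)) / (n + 1 : ℕ)
  have hn' : (0 : ℝ) < n := Nat.cast_pos.2 hn
  have hlog : Real.log (b (n + 1)) = v * (n + 1) := by
    simp only [v, Nat.cast_add_one]; field_simp
  calc Real.log (a n) / n ≤ Real.log (b (n + 1)) / n := by
        gcongr
        exacts [zero_lt_one.trans_le (ha n), h n]
    _ = v + v / n := by rw [hlog]; field_simp
    _ ≤ v + 2 * Real.log C / n := by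
        gcongr
        exact log_div_le_two_mul_log (hb _) (hbC _)

theorem growthRate_le_of_le_pow_mul {L : ℕ} (hL : 0 < L) (ha : ∀ n, 1 ≤ a n)
    (hb : ∀ n, 1 ≤ b n) (h : ∀ n, a n ≤ b L ^ (n / L) * b (n % L)) :
    growthRate a ≤ Real.log (b L) / L := by
  set B := ∑ r ∈ Finset.range L, b r
  have hbB : ∀ r < L, b r ≤ B := fun r hr =>
    Finset.single_le_sum (fun i _ => zero_le_one.trans (hb i)) (Finset.mem_range.2 hr)
  have hbL := Real.log_nonneg (hb L)
  refine (limsup_le_limsup_succ_of_le_add_div (v := fun _ => Real.log (b L) / L)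
    (K := Real.log B) (isCoboundedUnder_log_div ha) (isBoundedUnder_const) fun n hn => ?_).trans
    (limsup_const _).le
  have hn' : (0 : ℝ) < n := Nat.cast_pos.2 hn
  have hpos : ∀ r, 0 < b r := fun r => zero_lt_one.trans_le (hb r)
  have hlog : Real.log (a n) ≤ n * (Real.log (b L) / L) + Real.log B := by
    calc Real.log (a n) ≤ Real.log (b L ^ (n / L) * b (n % L)) :=
          Real.log_le_log (zero_lt_one.trans_le (ha n)) (h n)
      _ = (n / L : ℕ) * Real.log (b L) + Real.log (b (n % L)) := by
          rw [Real.log_mul (pow_pos (hpos L) _).ne' (hpos _).ne', Real.log_pow]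
      _ ≤ n / L * Real.log (b L) + Real.log B := by
          gcongr
          · exact Nat.cast_div_le
          · exact hpos _
          · exact hbB _ (Nat.mod_lt n hL)
      _ = n * (Real.log (b L) / L) + Real.log B := by ring
  rw [div_le_iff₀ hn']
  calc Real.log (a n) ≤ n * (Real.log (b L) / L) + Real.log B := hlog
    _ = (Real.log (b L) / L + Real.log B / n) * n := by field_simp

end GrowthRate

section Shadowing

variable {f : ι → X → X}

def ChainShadowed (f : ι → X → X) (δ ρ : ℝ) (L : ℕ) : Prop :=
  ∀ (w : List ι) (c : ℕ → X), IsChainSeq f w δ c →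
    ∀ j ≤ min L w.length, dist (orbitSeg f w (c 0) j) (c j) ≤ ρ

theorem ChainShadowed.mono {δ ρ : ℝ} {L L' : ℕ} (h : ChainShadowed f δ ρ L)
    (hL : L' ≤ L) : ChainShadowed f δ ρ L' :=
  fun w c hc j hj => h w c hc j (hj.trans (min_le_min_right _ hL))

theorem exists_chainShadowed [Finite ι] [CompactSpace X] (hf : ∀ i, Continuous (f i)) {ρ : ℝ}
    (hρ : 0 < ρ) (L : ℕ) : ∃ δ > 0, ChainShadowed f δ ρ L := by
  induction L generalizing ρ with
  | zero =>
    refine ⟨ρ, hρ, fun w c _ j hj => ?_⟩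
    obtain rfl := Nat.le_zero.1 (hj.trans (min_le_left _ _))
    simpa [orbitSeg] using hρ.le
  | succ L ih =>
    obtain ⟨η, hη, hfη⟩ := Metric.uniformEquicontinuous_iff.1
      (uniformEquicontinuous_finite.2 fun i =>
        CompactSpace.uniformContinuous_of_continuous (hf i))
      (ρ / 2) (half_pos hρ)
    obtain ⟨δ, hδ, hsh⟩ := ih (ρ := min (η / 2) ρ) (by positivity)
    refine ⟨min δ (ρ / 2), by positivity, fun w c hc j hj => ?_⟩
    have hc' := hc.mono (min_le_left _ _)
    rcases Nat.lt_or_ge L j with hLj | hjL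
    · obtain rfl : j = L + 1 := by omega
      have hLw : L < w.length := by omega
      have hnear := hsh w c hc' L (le_min le_rfl hLw.le)
      rw [orbitSeg_succ f w _ hLw]
      calc dist (f _ (orbitSeg f w (c 0) L)) (c (L + 1))
          ≤ dist (f _ (orbitSeg f w (c 0) L)) (f _ (c L)) + dist (f _ (c L)) (c (L + 1)) :=
            dist_triangle _ _ _
        _ ≤ ρ / 2 + ρ / 2 := by
            gcongr
            · exact (hfη _ _ (hnear.trans_lt
                ((min_le_left _ _).trans_lt (half_lt_self hη))) _).le
            · exact (hc L hLw).trans (min_le_right _ _)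
        _ = ρ := add_halves ρ
    · exact (hsh w c hc' j (le_min hjL (hj.trans (min_le_right _ _)))).trans (min_le_right _ _)

theorem ChainShadowed.dist_lt {u : List ι} {δ ρ : ℝ} (hsh : ChainShadowed f δ ρ u.length)
    {c c' : ℕ → X} (hc : IsChainSeq f u δ c) (hc' : IsChainSeq f u δ c') {x : X}
    (hx : wordDist f u (c 0) x < ρ) (hx' : wordDist f u (c' 0) x < ρ) {j : ℕ}
    (hj : j ≤ u.length) : dist (c j) (c' j) < 4 * ρ := by
  have h₁ := hsh u c hc j (by simpa using hj)
  have h₂ := hsh u c' hc' j (by simpa using hj)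
  have h₃ := (dist_orbitSeg_le_wordDist f u (c 0) x hj).trans_lt hx
  have h₄ := (dist_orbitSeg_le_wordDist f u (c' 0) x hj).trans_lt hx'
  rw [dist_comm] at h₁ h₄
  linarith [dist_triangle (c j) (orbitSeg f u (c' 0) j) (c' j),
    dist_triangle4 (c j) (orbitSeg f u (c 0) j) (orbitSeg f u x j) (orbitSeg f u (c' 0) j)]

variable [CompactSpace X]

/-- Chains starting in one `(u, ε / 4)`-Bowen ball stay `ε`-close along `u`,
so inside a ball they can only be separated along `v`. -/
theorem pseudoSepMax_append_le {u v : List ι} {ε δ : ℝ} (hε : 0 < ε)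
    (hsh : ChainShadowed f δ (ε / 4) u.length) :
    pseudoSepMax f (u ++ v) ε δ ≤ sepMax f u (ε / 4) * pseudoSepMax f v ε δ := by
  obtain ⟨K₀, hK₀, hspan⟩ := exists_card_eq_sepMax_spanning f u (by positivity : 0 < ε / 4)
  choose p hpK₀ hp using hspan
  refine pseudoSepMax_le fun K hchain hsep => ?_
  rw [← hK₀, mul_comm]
  refine Finset.card_le_mul_card_image_of_maps_to (fun c _ => hpK₀ (c 0)) _ fun x _ => ?_
  set F := K.filter fun c => p (c 0) = x
  have hlate : ∀ c ∈ F, ∀ c' ∈ F, c ≠ c' →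
      ∃ j < v.length, ε < dist (c (u.length + j)) (c' (u.length + j)) := by
    intro c hc c' hc' hne
    simp only [F, Finset.mem_filter] at hc hc'
    obtain ⟨j, hj, hεj⟩ := hsep c hc.1 c' hc'.1 hne
    have hju : u.length < j := lt_of_not_ge fun hju => by
      have := hsh.dist_lt (hchain c hc.1).left_of_append (hchain c' hc'.1).left_of_append
        (hc.2 ▸ hp (c 0)) (hc'.2 ▸ hp (c' 0)) hju
      linarith
    refine ⟨j - u.length, by simp at hj; omega, ?_⟩
    rwa [Nat.add_sub_cancel' hju.le]
  have hinj : Set.InjOn (fun (c : ℕ → X) j => c (u.length + j)) F := fun c hc c' hc' heq => by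
    by_contra hne
    obtain ⟨j, -, hεj⟩ := hlate c hc c' hc' hne
    rw [show c (u.length + j) = c' (u.length + j) from congrFun heq j, dist_self] at hεj
    linarith
  rw [← Finset.card_image_of_injOn hinj]
  refine card_le_pseudoSepMax f v hε (fun d hd => ?_) fun d hd d' hd' hne => ?_
  · obtain ⟨c, hc, rfl⟩ := Finset.mem_image.1 hd
    exact (hchain c (Finset.mem_filter.1 hc).1).right_of_append
  · obtain ⟨c, hc, rfl⟩ := Finset.mem_image.1 hd
    obtain ⟨c', hc', rfl⟩ := Finset.mem_image.1 hd'
    exact hlate c hc c' hc' fun h => hne (h ▸ rfl)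

theorem pseudoSepMax_le_sepMax {w : List ι} {ε δ : ℝ} (hε : 0 < ε)
    (hsh : ChainShadowed f δ (ε / 4) w.length) :
    pseudoSepMax f w ε δ ≤ sepMax f w (ε / 4) := by
  simpa using (pseudoSepMax_append_le (v := []) hε hsh).trans
    (Nat.mul_le_mul_left _ (pseudoSepMax_nil_le_one f ε δ))

/-- The extra letter makes room for the last index `|w|`, seen by `wordDist`
but not by pseudo-separation along `w`. -/
theorem sepMax_le_pseudoSepMax_append (f : ι → X → X) (w : List ι) (i : ι) {ε ε' δ : ℝ}
    (hε' : 0 < ε') (hεε' : ε' < ε) (hδ : 0 ≤ δ) :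
    sepMax f w ε ≤ pseudoSepMax f (w ++ [i]) ε' δ := by
  refine sepMax_le fun K hK => ?_
  have hinj : Set.InjOn (orbitSeg f (w ++ [i])) K := fun x _ y _ hxy => congrFun hxy 0
  rw [← Finset.card_image_of_injOn hinj]
  refine card_le_pseudoSepMax f _ hε' (fun c hc => ?_) fun c hc c' hc' hne => ?_
  · obtain ⟨x, -, rfl⟩ := Finset.mem_image.1 hc
    exact isChainSeq_orbitSeg f _ x hδ
  · obtain ⟨x, hx, rfl⟩ := Finset.mem_image.1 hc
    obtain ⟨y, hy, rfl⟩ := Finset.mem_image.1 hc'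
    by_contra! hclose
    have := hK x hx y hy fun h => hne (h ▸ rfl)
    have : wordDist f w x y ≤ ε' := wordDist_le fun j hj => by
      simpa [orbitSeg_append_of_le f _ _ hj] using hclose j (by simp; omega)
    linarith

end Shadowing

theorem sum_ofFn_add {α M : Type*} [Fintype α] [AddCommMonoid M] (L k : ℕ) (g : List α → M) :
    ∑ w : Fin (L + k) → α, g (List.ofFn w) =
      ∑ u : Fin L → α, ∑ v : Fin k → α, g (List.ofFn u ++ List.ofFn v) := by
  rw [← (Fin.appendEquiv L k).sum_comp, Fintype.sum_prod_type]
  exact Finset.sum_congr rfl fun u _ => Finset.sum_congr rfl fun v _ =>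
    congrArg g (List.ofFn_fin_append u v)

theorem le_sum_div_pow {m n : ℕ} (hm : 0 < m) {g : (Fin n → Fin m) → ℝ} {x : ℝ}
    (h : ∀ w, x ≤ g w) : x ≤ (∑ w, g w) / (m : ℝ) ^ n := by
  rw [le_div_iff₀ (by positivity)]
  simpa [mul_comm] using Finset.card_nsmul_le_sum Finset.univ g x fun w _ => h w

theorem sum_div_pow_le {m n : ℕ} (hm : 0 < m) {g : (Fin n → Fin m) → ℝ} {x : ℝ}
    (h : ∀ w, g w ≤ x) : (∑ w, g w) / (m : ℝ) ^ n ≤ x := by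
  rw [div_le_iff₀ (by positivity)]
  simpa [mul_comm] using Finset.sum_le_card_nsmul Finset.univ g x fun w _ => h w

section Averages

variable {m : ℕ}

/-- The paper's `N(n, ε, G)`. -/
noncomputable def avgSepMax (f : Fin m → X → X) (ε : ℝ) (n : ℕ) : ℝ :=
  (∑ w : Fin n → Fin m, (sepMax f (List.ofFn w) ε : ℝ)) / (m : ℝ) ^ n

/-- The paper's `N*(n, ε, δ, G)`. -/
noncomputable def avgPseudoSepMax (f : Fin m → X → X) (ε δ : ℝ) (n : ℕ) : ℝ :=
  (∑ w : Fin n → Fin m, (pseudoSepMax f (List.ofFn w) ε δ : ℝ)) / (m : ℝ) ^ n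

theorem topEntropy_eq_iSup_growthRate (f : Fin m → X → X) :
    topEntropy f = ⨆ ε : {e : ℝ // 0 < e}, growthRate (avgSepMax f ε) :=
  rfl

theorem pseudoEntropy_eq_iSup_iInf_growthRate (f : Fin m → X → X) :
    pseudoEntropy f = ⨆ ε : {e : ℝ // 0 < e}, ⨅ δ : {d : ℝ // 0 < d},
      growthRate (avgPseudoSepMax f ε δ) :=
  rfl

variable [CompactSpace X] {f : Fin m → X → X}

theorem one_le_avgSepMax [Nonempty X] (hm : 0 < m) {ε : ℝ} (hε : 0 < ε) (n : ℕ) :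
    1 ≤ avgSepMax f ε n :=
  le_sum_div_pow hm fun _ => Nat.one_le_cast.2 (one_le_sepMax f _ hε)

theorem one_le_avgPseudoSepMax [Nonempty X] (hm : 0 < m) {ε δ : ℝ} (hε : 0 < ε)
    (hδ : 0 ≤ δ) (n : ℕ) : 1 ≤ avgPseudoSepMax f ε δ n :=
  le_sum_div_pow hm fun _ => Nat.one_le_cast.2 (one_le_pseudoSepMax f _ hε hδ)

theorem exists_avgSepMax_le_pow (hm : 0 < m) (f : Fin m → X → X) {ε : ℝ} (hε : 0 < ε) :
    ∃ C : ℕ, ∀ n, avgSepMax f ε n ≤ (C : ℝ) ^ (n + 1) := by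
  obtain ⟨C, hC⟩ := exists_sepMax_le_pow f hε
  exact ⟨C, fun n => sum_div_pow_le hm fun w => by
    exact_mod_cast (List.length_ofFn (f := w)) ▸ hC _⟩

theorem exists_avgPseudoSepMax_le_pow (hm : 0 < m) (f : Fin m → X → X) {ε : ℝ}
    (hε : 0 < ε) :
    ∃ C : ℕ, ∀ δ n, avgPseudoSepMax f ε δ n ≤ (C : ℝ) ^ (n + 1) := by
  obtain ⟨C, hC⟩ := exists_pseudoSepMax_le_pow f hε
  exact ⟨C, fun δ n => sum_div_pow_le hm fun w => by
    exact_mod_cast (List.length_ofFn (f := w)) ▸ hC _ δ⟩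

theorem avgSepMax_le_avgPseudoSepMax_succ (hm : 0 < m) {ε ε' δ : ℝ} (hε' : 0 < ε')
    (hεε' : ε' < ε) (hδ : 0 ≤ δ) (n : ℕ) :
    avgSepMax f ε n ≤ avgPseudoSepMax f ε' δ (n + 1) := by
  have hm' : (0 : ℝ) < m := Nat.cast_pos.2 hm
  rw [avgSepMax, avgPseudoSepMax, sum_ofFn_add n 1 fun w => (pseudoSepMax f w ε' δ : ℝ),
    pow_succ, ← div_div, div_right_comm, div_le_div_iff_of_pos_right (by positivity),
    le_div_iff₀ hm', Finset.sum_mul]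
  gcongr with u
  calc (sepMax f (List.ofFn u) ε : ℝ) * m
        = ∑ _v : Fin 1 → Fin m, (sepMax f (List.ofFn u) ε : ℝ) := by simp [mul_comm]
    _ ≤ ∑ v : Fin 1 → Fin m, (pseudoSepMax f (List.ofFn u ++ List.ofFn v) ε' δ : ℝ) := by
        gcongr with v
        simpa [List.ofFn_succ] using sepMax_le_pseudoSepMax_append f _ (v 0) hε' hεε' hδ

theorem avgPseudoSepMax_add_le {ε δ : ℝ} (hε : 0 < ε) {L : ℕ}
    (hsh : ChainShadowed f δ (ε / 4) L) (k : ℕ) :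
    avgPseudoSepMax f ε δ (L + k) ≤ avgSepMax f (ε / 4) L * avgPseudoSepMax f ε δ k := by
  rw [avgSepMax, avgPseudoSepMax, avgPseudoSepMax,
    sum_ofFn_add L k fun w => (pseudoSepMax f w ε δ : ℝ), pow_add, div_mul_div_comm,
    Finset.sum_mul_sum]
  gcongr with u _ v
  exact_mod_cast pseudoSepMax_append_le hε (by simpa using hsh)

theorem avgPseudoSepMax_le_avgSepMax {ε δ : ℝ} (hε : 0 < ε) {L n : ℕ}
    (hsh : ChainShadowed f δ (ε / 4) L) (hn : n ≤ L) :
    avgPseudoSepMax f ε δ n ≤ avgSepMax f (ε / 4) n := by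
  rw [avgSepMax, avgPseudoSepMax]
  gcongr with w
  exact_mod_cast pseudoSepMax_le_sepMax hε (hsh.mono (by simpa using hn))

theorem avgPseudoSepMax_le_pow_mul {ε δ : ℝ} (hε : 0 < ε) {L : ℕ} (hL : 0 < L)
    (hsh : ChainShadowed f δ (ε / 4) L) (n : ℕ) :
    avgPseudoSepMax f ε δ n ≤
      avgSepMax f (ε / 4) L ^ (n / L) * avgSepMax f (ε / 4) (n % L) := by
  induction n using Nat.strong_induction_on with
  | _ n ih =>
    rcases Nat.lt_or_ge n L with hnL | hLn
    · rw [Nat.div_eq_of_lt hnL, Nat.mod_eq_of_lt hnL, pow_zero, one_mul]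
      exact avgPseudoSepMax_le_avgSepMax hε hsh hnL.le
    obtain ⟨k, rfl⟩ := Nat.exists_eq_add_of_le hLn
    have hnonneg : 0 ≤ avgSepMax f (ε / 4) L := by unfold avgSepMax; positivity
    calc avgPseudoSepMax f ε δ (L + k)
        ≤ avgSepMax f (ε / 4) L * avgPseudoSepMax f ε δ k := avgPseudoSepMax_add_le hε hsh k
      _ ≤ avgSepMax f (ε / 4) L *
            (avgSepMax f (ε / 4) L ^ (k / L) * avgSepMax f (ε / 4) (k % L)) :=
          mul_le_mul_of_nonneg_left (ih k (by omega)) hnonneg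
      _ = _ := by rw [Nat.add_div_left _ hL, Nat.add_mod_left, pow_succ]; ring

end Averages

section Entropy

variable [CompactSpace X] {m : ℕ}

theorem growthRate_avgSepMax_le [Nonempty X] (hm : 0 < m) (f : Fin m → X → X) {ε δ : ℝ}
    (hε : 0 < ε) (hδ : 0 ≤ δ) :
    growthRate (avgSepMax f ε) ≤ growthRate (avgPseudoSepMax f (ε / 2) δ) := by
  obtain ⟨C, hC⟩ := exists_avgPseudoSepMax_le_pow hm f (half_pos hε)
  exact growthRate_le_of_le_succ (one_le_avgSepMax hm hε)
    (one_le_avgPseudoSepMax hm (half_pos hε) hδ) (hC δ)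
    (avgSepMax_le_avgPseudoSepMax_succ hm (half_pos hε) (half_lt_self hε) hδ)

theorem iInf_growthRate_avgPseudoSepMax_le [Nonempty X] (hm : 0 < m) (f : Fin m → X → X)
    (hf : ∀ i, Continuous (f i)) {ε : ℝ} (hε : 0 < ε) :
    ⨅ δ : {d : ℝ // 0 < d}, growthRate (avgPseudoSepMax f ε δ) ≤
      growthRate (avgSepMax f (ε / 4)) := by
  have hε4 : 0 < ε / 4 := by positivity
  obtain ⟨C, hC⟩ := exists_avgSepMax_le_pow hm f hε4
  obtain ⟨C', hC'⟩ := exists_avgPseudoSepMax_le_pow hm f hε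
  refine le_growthRate (one_le_avgSepMax hm hε4) hC fun L hL => ?_
  obtain ⟨δ, hδ, hsh⟩ := exists_chainShadowed hf hε4 L
  refine ciInf_le_of_le ⟨0, ?_⟩ ⟨δ, hδ⟩ ?_
  · rintro _ ⟨δ', rfl⟩
    exact growthRate_nonneg (one_le_avgPseudoSepMax hm hε δ'.2.le) (hC' δ')
  · exact growthRate_le_of_le_pow_mul hL (one_le_avgPseudoSepMax hm hε hδ.le)
      (one_le_avgSepMax hm hε4) (avgPseudoSepMax_le_pow_mul hε hL hsh)

end Entropy

theorem sepMax_of_isEmpty [IsEmpty X] (f : ι → X → X) (w : List ι) (ε : ℝ) :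
    sepMax f w ε = 0 :=
  Nat.le_zero.1 <| sepMax_le fun K _ => by simp [Finset.eq_empty_of_isEmpty K]

theorem pseudoSepMax_of_isEmpty [IsEmpty X] (f : ι → X → X) (w : List ι) (ε δ : ℝ) :
    pseudoSepMax f w ε δ = 0 :=
  Nat.le_zero.1 <| pseudoSepMax_le fun K _ _ => by simp [Finset.eq_empty_of_isEmpty K]

theorem topEntropy_of_isEmpty [IsEmpty X] {m : ℕ} (f : Fin m → X → X) : topEntropy f = 0 := by
  simp [topEntropy_eq_iSup_growthRate, growthRate, avgSepMax, sepMax_of_isEmpty]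

theorem pseudoEntropy_of_isEmpty [IsEmpty X] {m : ℕ} (f : Fin m → X → X) :
    pseudoEntropy f = 0 := by
  simp [pseudoEntropy_eq_iSup_iInf_growthRate, growthRate, avgPseudoSepMax,
    pseudoSepMax_of_isEmpty]

end FreeSemigroupAction

/-- `h(G) = h*(G)`. -/
theorem stmt0 {X : Type*} [MetricSpace X] [CompactSpace X] {m : ℕ} (hm : 0 < m)
    (f : Fin m → X → X) (hf : ∀ i, Continuous (f i)) :
    topEntropy f = pseudoEntropy f := by
  rcases isEmpty_or_nonempty X with hX | hX
  · rw [topEntropy_of_isEmpty, pseudoEntropy_of_isEmpty]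
  rw [topEntropy_eq_iSup_growthRate, pseudoEntropy_eq_iSup_iInf_growthRate]
  refine csSup_eq_csSup_of_forall_exists_le ?_ ?_
  · rintro _ ⟨⟨ε, hε⟩, rfl⟩
    exact ⟨_, ⟨⟨ε / 2, half_pos hε⟩, rfl⟩,
      le_ciInf fun δ => growthRate_avgSepMax_le hm f hε δ.2.le⟩
  · rintro _ ⟨⟨ε, hε⟩, rfl⟩
    exact ⟨_, ⟨⟨ε / 4, by positivity⟩, rfl⟩,
      iInf_growthRate_avgPseudoSepMax_le hm f hf hε⟩
end

section
/- For every natural number n and all 0 < ε, δ < 1/2, the maximal cardinality of an (n,ε,δ,F)-pseudo-separated set for the skew-product transformation F satisfies N*(n,ε,δ,F) ≥ Σ_{|w|=n} N*(w,ε,δ,G), where the sum is over all words w of length n in F_m^+. -/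
open Metric Filter Set
open scoped Classical

/-!
A maximal `(w, ε, δ)`-pseudo-separated family of chains in `X` is lifted to `Σ_m^+ × X` by
pairing the `j`-th point of a chain with `σ^j ω`, where `ω` is the word `w` padded to an infinite
sequence. The lifts are `δ`-pseudo-orbits of the skew product, because `σ` is followed exactly
and only the `X`-coordinate jumps. Lifts of chains along different words are `1`-apart in the
`Σ_m^+`-coordinate at the first letter where the words differ, and lifts of chains along the same
word are as separated as the chains, so the union over all words of length `n` is
`(n, ε, δ, F)`-pseudo-separated. Compactness of `X` bounds the size of such families, so that
`N*(n, ε, δ, F)` is a genuine maximum.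
-/

lemma exists_card_eq_sSup {α : Type*} {P Q : Finset α → Prop} (hP : P ∅) (hQ : Q ∅) :
    ∃ K, P K ∧ Q K ∧ K.card = sSup {k | ∃ K : Finset α, P K ∧ Q K ∧ K.card = k} := by
  by_cases hb : BddAbove {k | ∃ K : Finset α, P K ∧ Q K ∧ K.card = k}
  · exact Nat.sSup_mem ⟨0, (⟨∅, hP, hQ, rfl⟩ : ∃ K : Finset α, P K ∧ Q K ∧ K.card = 0)⟩ hb
  · rw [csSup_of_not_bddAbove hb, csSup_empty]
    exact ⟨∅, hP, hQ, rfl⟩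

lemma card_le_of_separated {Z C : Type*} [Fintype C] {D : Z → Z → ℝ} {ε : ℝ} (code : Z → C)
    (hcode : ∀ z z', code z = code z' → D z z' ≤ ε) {n : ℕ} {K : Finset (ℕ → Z)}
    (hK : ∀ c ∈ K, ∀ c' ∈ K, c ≠ c' → ∃ j < n, ε < D (c j) (c' j)) :
    K.card ≤ Fintype.card C ^ n := by
  have hinj : Set.InjOn (fun (c : ℕ → Z) (j : Fin n) => code (c j)) K := by
    intro c hc c' hc' hcode_eq
    by_contra hne
    obtain ⟨j, hj, hlt⟩ := hK c hc c' hc' hne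
    exact (hcode _ _ (congrFun hcode_eq ⟨j, hj⟩)).not_gt hlt
  simpa using Finset.card_le_card_of_injOn _ (fun _ _ => Finset.mem_coe.2 (Finset.mem_univ _)) hinj

section SkewProduct

variable {X : Type*} {m : ℕ}

lemma sigmaDist_self (ω : ℕ → Fin m) : sigmaDist m ω ω = 0 := by
  simp [sigmaDist]

lemma sigmaDist_eq_one_of_apply_zero_ne {ω ω' : ℕ → Fin m} (h : ω 0 ≠ ω' 0) :
    sigmaDist m ω ω' = 1 := by
  rw [sigmaDist, dif_pos ⟨0, h⟩, (Nat.find_eq_zero _).2 h, pow_zero]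

lemma sigmaDist_le_of_eqOn_lt {L : ℕ} {ω ω' : ℕ → Fin m} (h : ∀ i < L, ω i = ω' i) :
    sigmaDist m ω ω' ≤ (1 / 2 : ℝ) ^ L := by
  rw [sigmaDist]
  split_ifs with hd
  · have hk := Nat.find_spec hd
    have hLk : L ≤ Nat.find hd := by
      by_contra! hc
      exact hk (h _ hc)
    have hm2 : 2 ≤ m := by
      rcases m with _ | _ | m
      · exact (ω 0).elim0
      · exact absurd (Subsingleton.elim (α := Fin 1) _ _) hk
      · omega
    calc (1 / (m : ℝ)) ^ Nat.find hd ≤ (1 / 2 : ℝ) ^ Nat.find hd := by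
          gcongr
          exact_mod_cast hm2
      _ ≤ (1 / 2 : ℝ) ^ L := pow_le_pow_of_le_one (by norm_num) (by norm_num) hLk
  · positivity

def extendWord {n : ℕ} (a : Fin m) (w : Fin n → Fin m) : ℕ → Fin m :=
  fun j => if h : j < n then w ⟨j, h⟩ else a

lemma extendWord_of_lt {n : ℕ} (a : Fin m) (w : Fin n → Fin m) {j : ℕ} (hj : j < n) :
    extendWord a w j = w ⟨j, hj⟩ :=
  dif_pos hj

lemma extendWord_injective {n : ℕ} (a : Fin m) : Function.Injective (extendWord (n := n) a) :=
  fun _ _ h => funext fun i => by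
    simpa [extendWord_of_lt _ _ i.isLt] using congrFun h i

def liftChain (ω : ℕ → Fin m) (c : ℕ → X) : ℕ → (ℕ → Fin m) × X :=
  fun j => (fun i => ω (j + i), c j)

lemma liftChain_injective_left {ω ω' : ℕ → Fin m} {c c' : ℕ → X}
    (h : liftChain ω c = liftChain ω' c') : ω = ω' := by
  simpa [liftChain] using congrArg Prod.fst (congrFun h 0)

lemma liftChain_injective_right (ω : ℕ → Fin m) : Function.Injective (liftChain (X := X) ω) :=
  fun _ _ h => funext fun j => congrArg Prod.snd (congrFun h j)

variable [MetricSpace X]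

lemma isChainSeq_ofFn_iff {ι : Type*} {f : ι → X → X} {n : ℕ} {w : Fin n → ι} {δ : ℝ}
    {c : ℕ → X} :
    IsChainSeq f (List.ofFn w) δ c ↔
      ∀ j (hj : j < n), dist (f (w ⟨j, hj⟩) (c j)) (c (j + 1)) ≤ δ := by
  simp [IsChainSeq]

lemma isPseudoOrbit_liftChain {f : Fin m → X → X} {n : ℕ} {δ : ℝ} (hδ : 0 ≤ δ)
    {ω : ℕ → Fin m} {c : ℕ → X} (hc : ∀ j < n, dist (f (ω j) (c j)) (c (j + 1)) ≤ δ) :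
    IsPseudoOrbit (skewDist m) (skewMap f) n δ (liftChain ω c) := by
  intro j hj
  have hshift : (skewMap f (liftChain ω c j)).1 = (liftChain ω c (j + 1)).1 := by
    funext i
    simp only [skewMap, liftChain, Nat.add_right_comm, Nat.add_assoc]
  rw [skewDist, hshift, sigmaDist_self]
  exact max_le hδ (hc j hj)

lemma dist_le_skewDist_liftChain (ω ω' : ℕ → Fin m) (c c' : ℕ → X) (j : ℕ) :
    dist (c j) (c' j) ≤ skewDist m (liftChain ω c j) (liftChain ω' c' j) :=
  le_max_right _ _

lemma one_le_skewDist_liftChain {ω ω' : ℕ → Fin m} {j : ℕ} (h : ω j ≠ ω' j) (c c' : ℕ → X) :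
    1 ≤ skewDist m (liftChain ω c j) (liftChain ω' c' j) :=
  (sigmaDist_eq_one_of_apply_zero_ne (by simpa [liftChain] using h)).ge.trans (le_max_left _ _)

lemma exists_lt_skewDist_liftChain_of_ne {n : ℕ} (a : Fin m) {w w' : Fin n → Fin m}
    (hw : w ≠ w') {ε : ℝ} (hε : ε < 1) (c c' : ℕ → X) :
    ∃ j < n, ε < skewDist m (liftChain (extendWord a w) c j) (liftChain (extendWord a w') c' j) := by
  obtain ⟨i, hi⟩ := Function.ne_iff.1 hw
  refine ⟨i, i.isLt, hε.trans_le (one_le_skewDist_liftChain ?_ c c')⟩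
  rwa [extendWord_of_lt _ _ i.isLt, extendWord_of_lt _ _ i.isLt]

lemma bddAbove_pseudoSep_card_skewDist [CompactSpace X] (f : Fin m → X → X) (n : ℕ) {ε : ℝ}
    (hε : 0 < ε) (δ : ℝ) :
    BddAbove {k | ∃ K : Finset (ℕ → (ℕ → Fin m) × X),
      (∀ c ∈ K, IsPseudoOrbit (skewDist m) (skewMap f) n δ c) ∧
      (∀ c ∈ K, ∀ c' ∈ K, c ≠ c' → ∃ j < n, ε < skewDist m (c j) (c' j)) ∧ K.card = k} := by
  obtain ⟨L, hL⟩ : ∃ L : ℕ, (1 / 2 : ℝ) ^ L < ε := exists_pow_lt_of_lt_one hε (by norm_num)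
  obtain ⟨t, -, ht⟩ := (isCompact_univ (X := X)).elim_nhds_subcover (fun x => ball x (ε / 2))
    (fun x _ => ball_mem_nhds x (half_pos hε))
  have hnet : ∀ x : X, ∃ y : t, dist x y < ε / 2 := fun x => by
    simpa using ht (mem_univ x)
  choose net hnet using hnet
  let code (p : (ℕ → Fin m) × X) : (Fin L → Fin m) × t := (fun i => p.1 i, net p.2)
  have hcode (p q) (h : code p = code q) : skewDist m p q ≤ ε := by
    simp only [code, Prod.mk.injEq, funext_iff] at h
    refine max_le ((sigmaDist_le_of_eqOn_lt fun i hi => h.1 ⟨i, hi⟩).trans hL.le) ?_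
    calc dist p.2 q.2 ≤ dist p.2 (net p.2) + dist q.2 (net q.2) := by
          rw [h.2]; exact dist_triangle_right _ _ _
      _ ≤ ε := by linarith [hnet p.2, hnet q.2]
  exact ⟨_, by rintro _ ⟨K, -, hK, rfl⟩; exact card_le_of_separated code hcode hK⟩

end SkewProduct

theorem stmt2_general {X : Type*} [MetricSpace X] [CompactSpace X] {m : ℕ} (hm : 0 < m)
    (f : Fin m → X → X) :
    ∀ (n : ℕ) (ε δ : ℝ), 0 < ε → ε < 1 / 2 → 0 < δ → δ < 1 / 2 →
      ∑ w : Fin n → Fin m, pseudoSepMax f (List.ofFn w) ε δ ≤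
        pseudoSepMaxMap (skewDist (X := X) m) (skewMap f) n ε δ := by
  intro n ε δ hε hε2 hδ _
  choose K hK_chain hK_sep hK_card using fun w : Fin n → Fin m =>
    exists_card_eq_sSup (P := fun K : Finset (ℕ → X) => ∀ c ∈ K, IsChainSeq f (List.ofFn w) δ c)
      (Q := fun K => ∀ c ∈ K, ∀ c' ∈ K, c ≠ c' →
        ∃ j : ℕ, j < (List.ofFn w).length ∧ ε < dist (c j) (c' j))
      (by simp) (by simp)
  let lift (p : Σ _ : Fin n → Fin m, ℕ → X) := liftChain (extendWord ⟨0, hm⟩ p.1) p.2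
  have hlift_inj : Function.Injective lift := by
    rintro ⟨w, c⟩ ⟨w', c'⟩ h
    obtain rfl := extendWord_injective _ (liftChain_injective_left h)
    obtain rfl := liftChain_injective_right _ h
    rfl
  refine le_csSup (bddAbove_pseudoSep_card_skewDist f n hε δ)
    ⟨(Finset.univ.sigma K).image lift, ?_, ?_, ?_⟩
  · simp only [Finset.mem_image, Finset.mem_sigma, Finset.mem_univ, true_and]
    rintro _ ⟨⟨w, c⟩, hc, rfl⟩
    refine isPseudoOrbit_liftChain hδ.le fun j hj => ?_
    rw [extendWord_of_lt _ _ hj]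
    exact isChainSeq_ofFn_iff.1 (hK_chain w c hc) j hj
  · simp only [Finset.mem_image, Finset.mem_sigma, Finset.mem_univ, true_and]
    rintro _ ⟨⟨w, c⟩, hc, rfl⟩ _ ⟨⟨w', c'⟩, hc', rfl⟩ hne
    by_cases hw : w = w'
    · subst hw
      obtain ⟨j, hj, hlt⟩ := hK_sep w c hc c' hc' fun h => hne (by rw [h])
      exact ⟨j, by simpa using hj, hlt.trans_le (dist_le_skewDist_liftChain _ _ _ _ j)⟩
    · exact exists_lt_skewDist_liftChain_of_ne _ hw (by linarith) c c'
  · rw [Finset.card_image_of_injective _ hlift_inj, Finset.card_sigma]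
    exact Finset.sum_congr rfl fun w _ => hK_card w

theorem stmt2 {X : Type*} [MetricSpace X] [CompactSpace X] {m : ℕ} (hm : 0 < m)
    (f : Fin m → X → X) (hf : ∀ i, Continuous (f i)) :
    ∀ (n : ℕ) (ε δ : ℝ), 0 < ε → ε < 1 / 2 → 0 < δ → δ < 1 / 2 →
      ∑ w : Fin n → Fin m, pseudoSepMax f (List.ofFn w) ε δ ≤
        pseudoSepMaxMap (skewDist (X := X) m) (skewMap f) n ε δ :=
  stmt2_general hm f
end

section
/- The product free semigroup action (X×Y, G×H) is chain recurrent if and only if both (X,G) and (Y,H) are chain recurrent. -/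
open Metric Filter Set
open scoped Classical

section Aux

variable {X : Type*} [MetricSpace X] {Y : Type*} [MetricSpace Y] {ι κ : Type*}

lemma chainFrom_trans {f : ι → X → X} {δ : ℝ} {a b c : X} {n k : ℕ}
    (h1 : ChainFrom f δ a b n) (h2 : ChainFrom f δ b c k) :
    ChainFrom f δ a c (n + k) := by
  obtain ⟨w1, hw1, c1, hc1, h10, h1n⟩ := h1
  obtain ⟨w2, hw2, c2, hc2, h20, h2k⟩ := h2
  refine ⟨w1 ++ w2, by simp [hw1, hw2],
    fun j => if j < n then c1 j else c2 (j - n), ?_, ?_, ?_⟩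
  · intro j hj
    have hjN : j < n + k := by simpa [hw1, hw2] using hj
    simp only [List.get_eq_getElem]
    by_cases hjn : j < n
    · rw [List.getElem_append_left (by omega : j < w1.length)]
      have hcj1 : (if j + 1 < n then c1 (j + 1) else c2 (j + 1 - n)) = c1 (j + 1) := by
        split
        · rfl
        · have hjn1 : j + 1 = n := by omega
          rw [hjn1, Nat.sub_self, h20, ← h1n]
      simp only [if_pos hjn, hcj1]
      simpa using hc1 j (by omega)
    · rw [List.getElem_append_right (by omega : w1.length ≤ j)]
      have h1' : ¬ j + 1 < n := by omega
      have h2' : j + 1 - n = (j - n) + 1 := by omega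
      simp only [if_neg hjn, if_neg h1', h2', hw1]
      simpa using hc2 (j - n) (by omega)
  · rcases Nat.eq_zero_or_pos n with h0 | h0
    · subst h0
      simp only [Nat.lt_irrefl, if_false, Nat.sub_zero] at *
      rw [h20, ← h1n, h10]
    · simp [h0, h10]
  · have hnot : ¬ n + k < n := by omega
    show (if n + k < n then c1 (n + k) else c2 (n + k - n)) = c
    rw [if_neg hnot]
    simpa [Nat.add_sub_cancel_left] using h2k

lemma chainFrom_pow {f : ι → X → X} {δ : ℝ} {x : X} {n : ℕ}
    (h : ChainFrom f δ x x n) : ∀ k : ℕ, ChainFrom f δ x x ((k + 1) * n) := by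
  intro k
  induction k with
  | zero => simpa using h
  | succ k ih =>
    have := chainFrom_trans ih h
    simpa [Nat.succ_mul] using this

lemma chainFrom_prod {f : ι → X → X} {g : κ → Y → Y} {δ : ℝ} {a b : X} {a' b' : Y} {N : ℕ}
    (h1 : ChainFrom f δ a b N) (h2 : ChainFrom g δ a' b' N) :
    ChainFrom (prodGens f g) δ (a, a') (b, b') N := by
  obtain ⟨w1, hw1, c1, hc1, h10, h1n⟩ := h1
  obtain ⟨w2, hw2, c2, hc2, h20, h2k⟩ := h2
  refine ⟨w1.zip w2, by simp [hw1, hw2], fun j => (c1 j, c2 j), ?_, by simp [h10, h20],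
    by simp [h1n, h2k]⟩
  intro j hj
  have hjlen : j < N := by simpa [hw1, hw2] using hj
  have hget : (w1.zip w2).get ⟨j, hj⟩ = (w1.get ⟨j, by omega⟩, w2.get ⟨j, by omega⟩) := by
    simp [List.get_eq_getElem, List.getElem_zip]
  rw [Prod.dist_eq]
  simp only [hget, prodGens]
  exact max_le (hc1 j (by omega)) (hc2 j (by omega))

lemma chainFrom_fst {f : ι → X → X} {g : κ → Y → Y} {δ : ℝ} {p q : X × Y} {N : ℕ}
    (h : ChainFrom (prodGens f g) δ p q N) : ChainFrom f δ p.1 q.1 N := by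
  obtain ⟨w, hw, c, hc, h0, hn⟩ := h
  refine ⟨w.map Prod.fst, by simp [hw], fun j => (c j).1, ?_, by simp [h0], by simp [hn]⟩
  intro j hj
  have hj' : j < w.length := by simpa using hj
  have hget : (w.map Prod.fst).get ⟨j, hj⟩ = (w.get ⟨j, hj'⟩).1 := by
    simp [List.get_eq_getElem]
  rw [hget]
  have := hc j hj'
  rw [Prod.dist_eq] at this
  exact le_trans (le_max_left _ _) this

lemma chainFrom_snd {f : ι → X → X} {g : κ → Y → Y} {δ : ℝ} {p q : X × Y} {N : ℕ}
    (h : ChainFrom (prodGens f g) δ p q N) : ChainFrom g δ p.2 q.2 N := by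
  obtain ⟨w, hw, c, hc, h0, hn⟩ := h
  refine ⟨w.map Prod.snd, by simp [hw], fun j => (c j).2, ?_, by simp [h0], by simp [hn]⟩
  intro j hj
  have hj' : j < w.length := by simpa using hj
  have hget : (w.map Prod.snd).get ⟨j, hj⟩ = (w.get ⟨j, hj'⟩).2 := by
    simp [List.get_eq_getElem]
  rw [hget]
  have := hc j hj'
  rw [Prod.dist_eq] at this
  exact le_trans (le_max_right _ _) this

end Aux

theorem stmt7 {X Y : Type*} [MetricSpace X] [MetricSpace Y] [CompactSpace X] [CompactSpace Y]
    [Nonempty X] [Nonempty Y] {m n : ℕ} (f : Fin m → X → X) (g : Fin n → Y → Y)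
    (hf : ∀ i, Continuous (f i)) (hg : ∀ j, Continuous (g j)) :
    ChainRecurrent (prodGens f g) ↔ ChainRecurrent f ∧ ChainRecurrent g := by
  constructor
  · intro h
    constructor
    · intro x ε hε
      obtain ⟨y⟩ := ‹Nonempty Y›
      obtain ⟨N, hN, hch⟩ := h (x, y) ε hε
      exact ⟨N, hN, chainFrom_fst hch⟩
    · intro y ε hε
      obtain ⟨x⟩ := ‹Nonempty X›
      obtain ⟨N, hN, hch⟩ := h (x, y) ε hε
      exact ⟨N, hN, chainFrom_snd hch⟩
  · rintro ⟨hX, hY⟩ ⟨x, y⟩ ε hε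
    obtain ⟨p, hp, hpch⟩ := hX x ε hε
    obtain ⟨q, hq, hqch⟩ := hY y ε hε
    refine ⟨p * q, Nat.mul_pos hp hq, ?_⟩
    have h1 : ChainFrom f ε x x ((q - 1 + 1) * p) := chainFrom_pow hpch (q - 1)
    have h2 : ChainFrom g ε y y ((p - 1 + 1) * q) := chainFrom_pow hqch (p - 1)
    have e1 : (q - 1 + 1) * p = p * q := by
      have : q - 1 + 1 = q := Nat.succ_pred_eq_of_pos hq
      rw [this, Nat.mul_comm]
    have e2 : (p - 1 + 1) * q = p * q := by
      have : p - 1 + 1 = p := Nat.succ_pred_eq_of_pos hp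
      rw [this]
    rw [e1] at h1; rw [e2] at h2
    exact chainFrom_prod h1 h2
end

section
/- The product free semigroup action (X×Y, G×H) is chain mixing if and only if both (X,G) and (Y,H) are chain mixing; and in that case, for all 0 < ε < δ, the chain mixing times satisfy m_ε(δ, G×H) = max{ m_ε(δ,G), m_ε(δ,H) }. -/
open Metric Filter Set
open scoped Classical

section MyAux

variable {X : Type*} [MetricSpace X] {Y : Type*} [MetricSpace Y] {ι κ : Type*}

lemma myChainFrom_prod {f : ι → X → X} {g : κ → Y → Y} {ε : ℝ} {a₁ b₁ : X} {a₂ b₂ : Y} {k : ℕ}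
    (h₁ : ChainFrom f ε a₁ b₁ k) (h₂ : ChainFrom g ε a₂ b₂ k) :
    ChainFrom (prodGens f g) ε (a₁, a₂) (b₁, b₂) k := by
  obtain ⟨w₁, hw₁, c₁, hc₁, h10, h1n⟩ := h₁
  obtain ⟨w₂, hw₂, c₂, hc₂, h20, h2n⟩ := h₂
  refine ⟨w₁.zip w₂, by simp [hw₁, hw₂], fun j => (c₁ j, c₂ j), ?_,
    by simp [h10, h20], by simp [h1n, h2n]⟩
  intro j hj
  have hl : (w₁.zip w₂).length = k := by simp [hw₁, hw₂]
  have hj1 : j < w₁.length := by omega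
  have hj2 : j < w₂.length := by omega
  have hz : (w₁.zip w₂).get ⟨j, hj⟩ = (w₁.get ⟨j, hj1⟩, w₂.get ⟨j, hj2⟩) := by
    simp [List.getElem_zip]
  rw [hz, Prod.dist_eq]
  exact max_le (hc₁ j hj1) (hc₂ j hj2)

lemma myChainFrom_fst {f : ι → X → X} {g : κ → Y → Y} {ε : ℝ} {a b : X × Y} {k : ℕ}
    (h : ChainFrom (prodGens f g) ε a b k) : ChainFrom f ε a.1 b.1 k := by
  obtain ⟨w, hw, c, hc, h0, hn⟩ := h
  refine ⟨w.map Prod.fst, by simp [hw], fun j => (c j).1, ?_, by show (c 0).1 = a.1; rw [h0], by show (c k).1 = b.1; rw [hn]⟩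
  intro j hj
  have hj' : j < w.length := by simpa using hj
  have hm : (w.map Prod.fst).get ⟨j, hj⟩ = (w.get ⟨j, hj'⟩).1 := by simp
  rw [hm]
  have := hc j hj'
  rw [Prod.dist_eq] at this
  exact le_trans (le_max_left _ _) this

lemma myChainFrom_snd {f : ι → X → X} {g : κ → Y → Y} {ε : ℝ} {a b : X × Y} {k : ℕ}
    (h : ChainFrom (prodGens f g) ε a b k) : ChainFrom g ε a.2 b.2 k := by
  obtain ⟨w, hw, c, hc, h0, hn⟩ := h
  refine ⟨w.map Prod.snd, by simp [hw], fun j => (c j).2, ?_, by show (c 0).2 = a.2; rw [h0], by show (c k).2 = b.2; rw [hn]⟩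
  intro j hj
  have hj' : j < w.length := by simpa using hj
  have hm : (w.map Prod.snd).get ⟨j, hj⟩ = (w.get ⟨j, hj'⟩).2 := by simp
  rw [hm]
  have := hc j hj'
  rw [Prod.dist_eq] at this
  exact le_trans (le_max_right _ _) this

/-- The defining set of `mTime`. -/
def Mset (f : ι → X → X) (ε δ : ℝ) (x : X) : Set ℕ :=
  {N : ℕ | ∀ n : ℕ, N ≤ n → ∀ y : X, ∃ z : X, dist z x < δ ∧ ChainFrom f ε z y n}

lemma mTime_eq_sInf_Mset (f : ι → X → X) (ε δ : ℝ) (x : X) :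
    mTime f ε δ x = sInf (Mset f ε δ x) := rfl

lemma Mset_upward {f : ι → X → X} {ε δ : ℝ} {x : X} {N N' : ℕ}
    (h : N ∈ Mset f ε δ x) (hle : N ≤ N') : N' ∈ Mset f ε δ x :=
  fun n hn => h n (le_trans hle hn)

lemma mem_Mset_iff {f : ι → X → X} {ε δ : ℝ} {x : X} (hne : (Mset f ε δ x).Nonempty) {N : ℕ} :
    N ∈ Mset f ε δ x ↔ mTime f ε δ x ≤ N := by
  constructor
  · intro h; exact Nat.sInf_le h
  · intro h
    exact Mset_upward (Nat.sInf_mem hne) h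

lemma mixing_mem_Mset {f : ι → X → X} {ε δ : ℝ} (hδ : 0 < δ) {N : ℕ}
    (hN : ∀ a b : X, ∀ n : ℕ, N ≤ n → ChainFrom f ε a b n) (x : X) :
    N ∈ Mset f ε δ x :=
  fun n hn y => ⟨x, by simpa using hδ, hN x y n hn⟩

end MyAux

theorem stmt11 {X Y : Type*} [MetricSpace X] [MetricSpace Y] [CompactSpace X] [CompactSpace Y]
    [Nonempty X] [Nonempty Y] {m n : ℕ} (f : Fin m → X → X) (g : Fin n → Y → Y)
    (hf : ∀ i, Continuous (f i)) (hg : ∀ j, Continuous (g j)) :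
    (ChainMixing (prodGens f g) ↔ ChainMixing f ∧ ChainMixing g) ∧
      (ChainMixing f → ChainMixing g → ∀ ε δ : ℝ, 0 < ε → ε < δ →
        mTimeSup (prodGens f g) ε δ = max (mTimeSup f ε δ) (mTimeSup g ε δ)) := by
  constructor
  · constructor
    · intro h
      constructor
      · intro ε hε
        obtain ⟨N, hN0, hN⟩ := h ε hε
        refine ⟨N, hN0, fun a b k hk => ?_⟩
        have y₀ : Y := Classical.arbitrary Y
        exact myChainFrom_fst (hN (a, y₀) (b, y₀) k hk)
      · intro ε hε
        obtain ⟨N, hN0, hN⟩ := h ε hε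
        refine ⟨N, hN0, fun a b k hk => ?_⟩
        have x₀ : X := Classical.arbitrary X
        exact myChainFrom_snd (hN (x₀, a) (x₀, b) k hk)
    · rintro ⟨h₁, h₂⟩ ε hε
      obtain ⟨N₁, hN₁0, hN₁⟩ := h₁ ε hε
      obtain ⟨N₂, hN₂0, hN₂⟩ := h₂ ε hε
      refine ⟨max N₁ N₂, lt_of_lt_of_le hN₁0 (le_max_left _ _), fun a b k hk => ?_⟩
      have c₁ := hN₁ a.1 b.1 k (le_trans (le_max_left _ _) hk)
      have c₂ := hN₂ a.2 b.2 k (le_trans (le_max_right _ _) hk)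
      simpa using myChainFrom_prod c₁ c₂
  · intro hmf hmg ε δ hε hεδ
    have hδ : 0 < δ := lt_trans hε hεδ
    obtain ⟨N₁, hN₁0, hN₁⟩ := hmf ε hε
    obtain ⟨N₂, hN₂0, hN₂⟩ := hmg ε hε
    -- nonemptiness of the Msets
    have hMf : ∀ x : X, N₁ ∈ Mset f ε δ x := fun x => mixing_mem_Mset hδ hN₁ x
    have hMg : ∀ y : Y, N₂ ∈ Mset g ε δ y := fun y => mixing_mem_Mset hδ hN₂ y
    have hnef : ∀ x : X, (Mset f ε δ x).Nonempty := fun x => ⟨N₁, hMf x⟩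
    have hneg : ∀ y : Y, (Mset g ε δ y).Nonempty := fun y => ⟨N₂, hMg y⟩
    -- key: prod Mset membership ↔ both
    have hkey : ∀ (x : X) (y : Y) (N : ℕ),
        N ∈ Mset (prodGens f g) ε δ (x, y) ↔ N ∈ Mset f ε δ x ∧ N ∈ Mset g ε δ y := by
      intro x y N
      constructor
      · intro h
        constructor
        · intro k hk y₁
          have y₂ : Y := Classical.arbitrary Y
          obtain ⟨z, hz, hc⟩ := h k hk (y₁, y₂)
          rw [Prod.dist_eq] at hz
          exact ⟨z.1, lt_of_le_of_lt (le_max_left _ _) hz, myChainFrom_fst hc⟩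
        · intro k hk y₂
          have x₂ : X := Classical.arbitrary X
          obtain ⟨z, hz, hc⟩ := h k hk (x₂, y₂)
          rw [Prod.dist_eq] at hz
          exact ⟨z.2, lt_of_le_of_lt (le_max_right _ _) hz, myChainFrom_snd hc⟩
      · rintro ⟨h₁, h₂⟩ k hk y'
        obtain ⟨z₁, hz₁, hc₁⟩ := h₁ k hk y'.1
        obtain ⟨z₂, hz₂, hc₂⟩ := h₂ k hk y'.2
        refine ⟨(z₁, z₂), ?_, by simpa using myChainFrom_prod hc₁ hc₂⟩
        rw [Prod.dist_eq]
        exact max_lt hz₁ hz₂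
    have hnep : ∀ p : X × Y, (Mset (prodGens f g) ε δ p).Nonempty := by
      intro p
      exact ⟨max N₁ N₂, (hkey p.1 p.2 _).2 ⟨Mset_upward (hMf p.1) (le_max_left _ _),
        Mset_upward (hMg p.2) (le_max_right _ _)⟩⟩
    -- pointwise mTime equality
    have hpt : ∀ p : X × Y,
        mTime (prodGens f g) ε δ p = max (mTime f ε δ p.1) (mTime g ε δ p.2) := by
      rintro ⟨x, y⟩
      apply le_antisymm
      · apply Nat.sInf_le
        exact (hkey x y _).2 ⟨(mem_Mset_iff (hnef x)).2 (le_max_left _ _),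
          (mem_Mset_iff (hneg y)).2 (le_max_right _ _)⟩
      · have hmem := Nat.sInf_mem (hnep (x, y))
        rw [hkey x y] at hmem
        exact max_le ((mem_Mset_iff (hnef x)).1 hmem.1) ((mem_Mset_iff (hneg y)).1 hmem.2)
    -- bounds
    have hbf : ∀ x : X, mTime f ε δ x ≤ N₁ := fun x => Nat.sInf_le (hMf x)
    have hbg : ∀ y : Y, mTime g ε δ y ≤ N₂ := fun y => Nat.sInf_le (hMg y)
    have hBf : BddAbove (Set.range fun x : X => mTime f ε δ x) := ⟨N₁, by rintro _ ⟨x, rfl⟩; exact hbf x⟩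
    have hBg : BddAbove (Set.range fun y : Y => mTime g ε δ y) := ⟨N₂, by rintro _ ⟨y, rfl⟩; exact hbg y⟩
    have hBp : BddAbove (Set.range fun p : X × Y => mTime (prodGens f g) ε δ p) := by
      refine ⟨max N₁ N₂, ?_⟩
      rintro _ ⟨p, rfl⟩
      show mTime (prodGens f g) ε δ p ≤ _
      rw [hpt p]
      exact max_le_max (hbf p.1) (hbg p.2)
    -- conclude
    unfold mTimeSup
    apply le_antisymm
    · apply csSup_le (Set.range_nonempty _)
      rintro _ ⟨p, rfl⟩
      show mTime (prodGens f g) ε δ p ≤ _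
      rw [hpt p]
      exact max_le_max (le_csSup hBf ⟨p.1, rfl⟩) (le_csSup hBg ⟨p.2, rfl⟩)
    · have y₀ : Y := Classical.arbitrary Y
      have x₀ : X := Classical.arbitrary X
      apply max_le
      · apply csSup_le (Set.range_nonempty _)
        rintro _ ⟨x, rfl⟩
        calc mTime f ε δ x ≤ mTime (prodGens f g) ε δ (x, y₀) := by
              rw [hpt (x, y₀)]; exact le_max_left _ _
          _ ≤ _ := le_csSup hBp ⟨(x, y₀), rfl⟩
      · apply csSup_le (Set.range_nonempty _)
        rintro _ ⟨y, rfl⟩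
        calc mTime g ε δ y ≤ mTime (prodGens f g) ε δ (x₀, y) := by
              rw [hpt (x₀, y)]; exact le_max_right _ _
          _ ≤ _ := le_csSup hBp ⟨(x₀, y), rfl⟩
end

section
/- Let (X,G) be a chain mixing free semigroup action and k ∈ ℕ. Then (X,G^k) is chain mixing, and for all 0 < ε < δ: (1) m_ε(δ,G^k) ≥ (1/k)·m_ε(δ,G); and (2) there exists ε' ≤ ε such that m_ε(δ,G^k) ≤ m_{ε'}(δ,G). -/
open Metric Filter Set
open scoped Classical

/-!
A `G^k`-chain of length `q` unfolds into a `G`-chain of length `q * k` with the same `ε`, since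
inside each block the orbit is exact. Conversely, the finitely many generators are uniformly
equicontinuous on the compact space, so there is `ε' ≤ ε` such that every `ε'`-chain of `k` steps
of `G` ends within `ε` of a true orbit of `G^k`; hence a `G`-chain of length `q * k` compresses
into a `G^k`-chain of length `q`. Compression gives chain mixing of `G^k` and
`m_ε(δ, G^k) ≤ m_ε'(δ, G)`. Unfolding, followed by a `G`-chain of length `n % k` supplied by chain
mixing of `G`, gives `m_ε(δ, G) ≤ k · m_ε(δ, G^k)`.
-/

section Chains

variable {X : Type*} [MetricSpace X] {ι : Type*} {f : ι → X → X} {ε : ℝ} {a b : X}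

theorem chainFrom_zero_iff : ChainFrom f ε a b 0 ↔ a = b := by
  constructor
  · rintro ⟨w, -, c, -, rfl, rfl⟩
    rfl
  · rintro rfl
    exact ⟨[], rfl, fun _ => a, fun j h => absurd h (Nat.not_lt_zero j), rfl, rfl⟩

theorem chainFrom_succ_iff {n : ℕ} :
    ChainFrom f ε a b (n + 1) ↔ ∃ i mid, dist (f i a) mid ≤ ε ∧ ChainFrom f ε mid b n := by
  constructor
  · rintro ⟨_ | ⟨i, w⟩, hw, c, hc, rfl, rfl⟩
    · simp at hw
    · refine ⟨i, c 1, by simpa using hc 0 (by simp), w, by simpa using hw,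
        fun j => c (j + 1), fun j hj => by simpa using hc (j + 1) (by simpa using hj), rfl, rfl⟩
  · rintro ⟨i, mid, hstep, w, hw, c, hc, rfl, rfl⟩
    refine ⟨i :: w, by simp [hw], fun | 0 => a | j + 1 => c j, ?_, rfl, rfl⟩
    rintro (_ | j) hj
    · simpa using hstep
    · simpa using hc j (by simpa using hj)

theorem ChainFrom.mono {ε' : ℝ} {n : ℕ} (h : ChainFrom f ε a b n) (hεε' : ε ≤ ε') :
    ChainFrom f ε' a b n :=
  let ⟨w, hw, c, hc, h0, hn⟩ := h
  ⟨w, hw, c, fun j hj => (hc j hj).trans hεε', h0, hn⟩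

theorem chainFrom_one_iff : ChainFrom f ε a b 1 ↔ ∃ i, dist (f i a) b ≤ ε := by
  simp [chainFrom_succ_iff (n := 0), chainFrom_zero_iff]

theorem chainFrom_add_iff {n r : ℕ} :
    ChainFrom f ε a b (n + r) ↔ ∃ mid, ChainFrom f ε a mid n ∧ ChainFrom f ε mid b r := by
  induction n generalizing a with
  | zero => simp [chainFrom_zero_iff]
  | succ n ih =>
    rw [Nat.succ_add, chainFrom_succ_iff]
    simp only [ih, chainFrom_succ_iff]
    constructor
    · rintro ⟨i, mid, hstep, mid', hn, hr⟩
      exact ⟨mid', ⟨i, mid, hstep, hn⟩, hr⟩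
    · rintro ⟨mid', ⟨i, mid, hstep, hn⟩, hr⟩
      exact ⟨i, mid, hstep, mid', hn, hr⟩

theorem chainFrom_applyWord (hε : 0 ≤ ε) (w : List ι) (a : X) :
    ChainFrom f ε a (applyWord f w a) w.length := by
  induction w with
  | nil => exact chainFrom_zero_iff.2 rfl
  | cons i w ih =>
    exact chainFrom_add_iff.2 ⟨_, ih, chainFrom_one_iff.2 ⟨i, by simpa [applyWord] using hε⟩⟩

theorem chainFrom_of_dist_applyWord_le (hε : 0 ≤ ε) {w : List ι} (hw : w ≠ [])
    (h : dist (applyWord f w a) b ≤ ε) : ChainFrom f ε a b w.length := by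
  obtain ⟨i, w, rfl⟩ := List.exists_cons_of_ne_nil hw
  exact chainFrom_add_iff.2 ⟨_, chainFrom_applyWord hε w a, chainFrom_one_iff.2 ⟨i, h⟩⟩

theorem ChainMixing.exists_chainFrom_to (h : ChainMixing f) (hε : 0 < ε) (b : X) (r : ℕ) :
    ∃ a, ChainFrom f ε a b r := by
  obtain ⟨N, -, hN⟩ := h ε hε
  obtain ⟨a, -, ha⟩ := chainFrom_add_iff.1 (hN b b (N + r) (Nat.le_add_right N r))
  exact ⟨a, ha⟩


theorem chainFrom_mul_of_chainFrom_powerGens {k q : ℕ} (hk : 0 < k) (hε : 0 ≤ ε)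
    (h : ChainFrom (powerGens f k) ε a b q) : ChainFrom f ε a b (q * k) := by
  induction q generalizing a with
  | zero =>
    rw [zero_mul, chainFrom_zero_iff]
    exact chainFrom_zero_iff.1 h
  | succ q ih =>
    obtain ⟨u, mid, hstep, hrest⟩ := chainFrom_succ_iff.1 h
    have hblock : ChainFrom f ε a mid k := by
      simpa using chainFrom_of_dist_applyWord_le hε (w := List.ofFn u)
        (by simpa [List.ofFn_eq_nil_iff] using hk.ne') hstep
    rw [Nat.succ_mul, add_comm]
    exact chainFrom_add_iff.2 ⟨mid, hblock, ih hrest⟩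

theorem chainFrom_powerGens_of_chainFrom_mul {ε' : ℝ} {k q : ℕ}
    (hshadow : ∀ a b, ChainFrom f ε' a b k → ∃ u, dist (powerGens f k u a) b ≤ ε)
    (h : ChainFrom f ε' a b (q * k)) : ChainFrom (powerGens f k) ε a b q := by
  induction q generalizing a with
  | zero =>
    rw [zero_mul, chainFrom_zero_iff] at h
    exact chainFrom_zero_iff.2 h
  | succ q ih =>
    rw [Nat.succ_mul, add_comm, chainFrom_add_iff] at h
    obtain ⟨mid, hblock, hrest⟩ := h
    obtain ⟨u, hu⟩ := hshadow a mid hblock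
    exact chainFrom_succ_iff.2 ⟨u, mid, hu, ih hrest⟩

theorem exists_forall_chainFrom_exists_dist_powerGens_le [CompactSpace X] [Finite ι]
    (hf : ∀ i, Continuous (f i)) (n : ℕ) (hε : 0 < ε) :
    ∃ ε' > 0, ε' ≤ ε ∧ ∀ a b, ChainFrom f ε' a b n → ∃ u, dist (powerGens f n u a) b ≤ ε := by
  induction n generalizing ε with
  | zero =>
    refine ⟨ε, hε, le_rfl, fun a b h => ⟨Fin.elim0, ?_⟩⟩
    simp [powerGens, applyWord, chainFrom_zero_iff.1 h, hε.le]
  | succ n ih =>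
    obtain ⟨η, hη, hfη⟩ := Metric.uniformEquicontinuous_iff.1 (uniformEquicontinuous_finite.2
      fun i => CompactSpace.uniformContinuous_of_continuous (hf i)) (ε / 2) (half_pos hε)
    obtain ⟨ε₁, hε₁, -, hshadow⟩ := ih (half_pos hη)
    refine ⟨min ε₁ (ε / 2), by positivity, (min_le_right _ _).trans (half_le_self hε.le),
      fun a b h => ?_⟩
    obtain ⟨mid, hn, hlast⟩ := chainFrom_add_iff.1 h
    obtain ⟨u, hu⟩ := hshadow a mid (hn.mono (min_le_left _ _))
    obtain ⟨i, hi⟩ := chainFrom_one_iff.1 hlast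
    refine ⟨Fin.cons i u, ?_⟩
    calc dist (powerGens f (n + 1) (Fin.cons i u) a) b
        = dist (f i (powerGens f n u a)) b := by simp [powerGens, applyWord]
      _ ≤ dist (f i (powerGens f n u a)) (f i mid) + dist (f i mid) b := dist_triangle _ _ _
      _ ≤ ε / 2 + ε / 2 :=
        add_le_add (hfη _ _ (hu.trans_lt (half_lt_self hη)) i).le (hi.trans (min_le_right _ _))
      _ = ε := add_halves ε

theorem ChainMixing.powerGens [CompactSpace X] [Finite ι] (hf : ∀ i, Continuous (f i))
    (h : ChainMixing f) {k : ℕ} (hk : 0 < k) : ChainMixing (powerGens f k) := by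
  intro ε hε
  obtain ⟨ε', hε', -, hshadow⟩ := exists_forall_chainFrom_exists_dist_powerGens_le hf k hε
  obtain ⟨N, hN, hchain⟩ := h ε' hε'
  exact ⟨N, hN, fun a b n hn => chainFrom_powerGens_of_chainFrom_mul hshadow
    (hchain a b (n * k) (hn.trans (Nat.le_mul_of_pos_right n hk)))⟩

theorem mTimeSup_le_of_forall {δ : ℝ} {N : ℕ}
    (h : ∀ x, ∀ n, N ≤ n → ∀ y, ∃ z, dist z x < δ ∧ ChainFrom f ε z y n) :
    mTimeSup f ε δ ≤ N :=
  csSup_le' <| by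
    rintro _ ⟨x, rfl⟩
    exact Nat.sInf_le (h x)

theorem ChainMixing.exists_chainFrom_of_mTimeSup_le (h : ChainMixing f) (hε : 0 < ε) {δ : ℝ}
    (hδ : 0 < δ) {n : ℕ} (hn : mTimeSup f ε δ ≤ n) (x y : X) :
    ∃ z, dist z x < δ ∧ ChainFrom f ε z y n := by
  obtain ⟨N, -, hN⟩ := h ε hε
  have hmem : ∀ x, N ∈ {N : ℕ | ∀ n, N ≤ n → ∀ y : X, ∃ z, dist z x < δ ∧ ChainFrom f ε z y n} :=
    fun x n hn y => ⟨x, by simpa using hδ, hN x y n hn⟩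
  have hbdd : BddAbove (Set.range fun x => mTime f ε δ x) :=
    ⟨N, by rintro _ ⟨x, rfl⟩; exact Nat.sInf_le (hmem x)⟩
  exact Nat.sInf_mem ⟨N, hmem x⟩ n ((le_csSup hbdd ⟨x, rfl⟩).trans hn) y

theorem mTimeSup_le_mul_mTimeSup_powerGens (h : ChainMixing f) {k : ℕ}
    (hpow : ChainMixing (powerGens f k)) (hk : 0 < k) (hε : 0 < ε) {δ : ℝ} (hδ : 0 < δ) :
    mTimeSup f ε δ ≤ k * mTimeSup (powerGens f k) ε δ := by
  refine mTimeSup_le_of_forall fun x n hn y => ?_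
  obtain ⟨v, hv⟩ := h.exists_chainFrom_to hε y (n % k)
  have hq : mTimeSup (powerGens f k) ε δ ≤ n / k := (Nat.le_div_iff_mul_le hk).2 (by linarith)
  obtain ⟨z, hz, hzv⟩ := hpow.exists_chainFrom_of_mTimeSup_le hε hδ hq x v
  refine ⟨z, hz, ?_⟩
  rw [← Nat.div_add_mod' n k]
  exact chainFrom_add_iff.2 ⟨v, chainFrom_mul_of_chainFrom_powerGens hk hε.le hzv, hv⟩

theorem mTimeSup_powerGens_le {ε' δ : ℝ} {k : ℕ} (h : ChainMixing f) (hk : 0 < k) (hε' : 0 < ε')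
    (hδ : 0 < δ) (hshadow : ∀ a b, ChainFrom f ε' a b k → ∃ u, dist (powerGens f k u a) b ≤ ε) :
    mTimeSup (powerGens f k) ε δ ≤ mTimeSup f ε' δ :=
  mTimeSup_le_of_forall fun x n hn y => by
    obtain ⟨z, hz, hzy⟩ := h.exists_chainFrom_of_mTimeSup_le hε' hδ
      (hn.trans (Nat.le_mul_of_pos_right n hk)) x y
    exact ⟨z, hz, chainFrom_powerGens_of_chainFrom_mul hshadow hzy⟩

end Chains

theorem stmt12 {X : Type*} [MetricSpace X] [CompactSpace X] {m : ℕ}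
    (f : Fin m → X → X) (hf : ∀ i, Continuous (f i)) (hcm : ChainMixing f)
    (k : ℕ) (hk : 0 < k) :
    ChainMixing (powerGens f k) ∧
      ∀ ε δ : ℝ, 0 < ε → ε < δ →
        (1 / (k : ℝ)) * (mTimeSup f ε δ : ℝ) ≤ (mTimeSup (powerGens f k) ε δ : ℝ) ∧
          ∃ ε' : ℝ, 0 < ε' ∧ ε' ≤ ε ∧ mTimeSup (powerGens f k) ε δ ≤ mTimeSup f ε' δ := by
  have hpow : ChainMixing (powerGens f k) := hcm.powerGens hf hk
  refine ⟨hpow, fun ε δ hε hεδ => ⟨?_, ?_⟩⟩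
  · have hle := mTimeSup_le_mul_mTimeSup_powerGens hcm hpow hk hε (hε.trans hεδ)
    rw [one_div, inv_mul_le_iff₀ (by exact_mod_cast hk)]
    exact_mod_cast hle
  · obtain ⟨ε', hε', hε'ε, hshadow⟩ := exists_forall_chainFrom_exists_dist_powerGens_le hf k hε
    exact ⟨ε', hε', hε'ε, mTimeSup_powerGens_le hcm hk hε' (hε.trans hεδ) hshadow⟩
end

section
/- Let G be a chain transitive free semigroup action on a compact metric space X and ε > 0. Then there exists k_ε ≥ 1 such that gcd(T_ε(x)) = k_ε for every x ∈ X; that is, the greatest common divisor of the set of lengths of (w,ε)-chains from x to itself does not depend on the point x. -/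
open Metric Filter Set
open scoped Classical

private lemma chain_concat {X : Type*} [MetricSpace X] {ι : Type*} {f : ι → X → X} {δ : ℝ}
    {a b c : X} {p q : ℕ} (h1 : ChainFrom f δ a b p) (h2 : ChainFrom f δ b c q) :
    ChainFrom f δ a c (p + q) := by
  obtain ⟨w1, hw1, c1, hc1, h10, h1p⟩ := h1
  obtain ⟨w2, hw2, c2, hc2, h20, h2q⟩ := h2
  refine ⟨w1 ++ w2, by simp [hw1, hw2],
    fun j => if j < p then c1 j else c2 (j - p), ?_, ?_, ?_⟩
  · intro j hj
    have hjlen : j < (w1 ++ w2).length := hj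
    rw [List.length_append, hw1, hw2] at hj
    by_cases hjp : j < p
    · have hgl : (w1 ++ w2).get ⟨j, hjlen⟩ = w1.get ⟨j, hw1 ▸ hjp⟩ := by
        simp [List.getElem_append, hw1, hjp]
      have hcj1 : (if j + 1 < p then c1 (j + 1) else c2 (j + 1 - p)) = c1 (j + 1) := by
        by_cases h : j + 1 < p
        · simp [h]
        · have hjp1 : j + 1 = p := by omega
          simp [h, hjp1, h20, ← h1p]
      simp only [hjp, if_true, hgl, hcj1]
      exact hc1 j (hw1 ▸ hjp)
    · have hjw : w1.length ≤ j := by omega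
      have hj2 : j - p < w2.length := by omega
      have hgl : (w1 ++ w2).get ⟨j, hjlen⟩ = w2.get ⟨j - p, hw2 ▸ (by omega)⟩ := by
        simp [List.getElem_append, hw1, hjp, hjw]
      have h1 : ¬ j + 1 < p := by omega
      simp only [hjp, if_false, hgl, h1, if_false]
      have : j + 1 - p = (j - p) + 1 := by omega
      rw [this]
      exact hc2 (j - p) (hw2 ▸ (by omega))
  · by_cases h0 : 0 < p
    · simp [h0, h10]
    · have hp : p = 0 := by omega
      subst hp
      simp [h20, ← h1p, h10]
  · by_cases hq : 0 < q
    · have : ¬ p + q < p := by omega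
      simpa [this] using h2q
    · have hq0 : q = 0 := by omega
      subst hq0
      have : ¬ p + 0 < p := by omega
      simp [this, h20, ← h2q]

private lemma dvd_transfer {X : Type*} [MetricSpace X] {m : ℕ} {f : Fin m → X → X}
    (hct : ChainTransitive f) {ε : ℝ} (hε : 0 < ε) {x y : X} {d : ℕ}
    (hd : ∀ t ∈ Tset f ε x, d ∣ t) : ∀ t ∈ Tset f ε y, d ∣ t := by
  obtain ⟨a, ha, cha⟩ := hct ε hε x y
  obtain ⟨b, hb, chb⟩ := hct ε hε y x
  rintro t ⟨ht, cht⟩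
  have h1 : d ∣ a + b := hd _ ⟨by omega, chain_concat cha chb⟩
  have h2 : d ∣ a + (t + b) := hd _ ⟨by omega, chain_concat cha (chain_concat cht chb)⟩
  have h2' : d ∣ (a + b) + t := by rwa [show a + (t + b) = (a + b) + t by omega] at h2
  exact (Nat.dvd_add_right h1).mp h2'

private lemma exists_gcd {T : Set ℕ} (hT : ∃ n ∈ T, 0 < n) : ∃ k, 1 ≤ k ∧ IsGCDOf T k := by
  obtain ⟨n0, hn0T, hn0⟩ := hT
  set D := {d : ℕ | ∀ t ∈ T, d ∣ t} with hD
  have h1D : (1 : ℕ) ∈ D := fun t _ => one_dvd t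
  have hbdd : BddAbove D := ⟨n0, fun d hd => Nat.le_of_dvd hn0 (hd n0 hn0T)⟩
  have hk : sSup D ∈ D := Nat.sSup_mem ⟨1, h1D⟩ hbdd
  have hk1 : 1 ≤ sSup D := le_csSup hbdd h1D
  refine ⟨sSup D, hk1, hk, ?_⟩
  intro d hd
  have hlcm : Nat.lcm d (sSup D) ∈ D := fun t ht => Nat.lcm_dvd (hd t ht) (hk t ht)
  have hle : Nat.lcm d (sSup D) ≤ sSup D := le_csSup hbdd hlcm
  have hdpos : 0 < d := Nat.pos_of_dvd_of_pos (hd n0 hn0T) hn0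
  have heq : Nat.lcm d (sSup D) = sSup D :=
    le_antisymm hle (Nat.le_of_dvd (Nat.lcm_pos hdpos (by omega)) (Nat.dvd_lcm_right _ _))
  exact heq ▸ Nat.dvd_lcm_left _ _

theorem stmt13 {X : Type*} [MetricSpace X] [CompactSpace X] {m : ℕ}
    (f : Fin m → X → X) (hf : ∀ i, Continuous (f i)) (hct : ChainTransitive f)
    (ε : ℝ) (hε : 0 < ε) :
    ∃ k : ℕ, 1 ≤ k ∧ ∀ x : X, IsGCDOf (Tset f ε x) k := by
  by_cases hX : Nonempty X
  · obtain ⟨x0⟩ := hX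
    have hT : ∀ x : X, ∃ n ∈ Tset f ε x, 0 < n := fun x => by
      obtain ⟨n, hn, hc⟩ := hct ε hε x x
      exact ⟨n, ⟨hn, hc⟩, hn⟩
    obtain ⟨k, hk1, hk⟩ := exists_gcd (hT x0)
    refine ⟨k, hk1, fun x => ?_⟩
    obtain ⟨k', hk'1, hk'⟩ := exists_gcd (hT x)
    have h1 : k ∣ k' := hk'.2 k (dvd_transfer hct hε hk.1)
    have h2 : k' ∣ k := hk.2 k' (dvd_transfer hct hε hk'.1)
    have hkk : k = k' := Nat.dvd_antisymm h1 h2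
    exact hkk ▸ hk'
  · exact ⟨1, le_refl 1, fun x => absurd ⟨x⟩ hX⟩
end
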